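/- arXiv:1603.07570 — 3 statements merged into one kernel-verified Lean document; each statement's English description precedes it below -/
import Mathlib

section
/- Let (R,G) be a rooted graph and let (e,H) be a rooted graph whose two roots form an edge e of H. Suppose (e,H) is balanced and that for some t > 0 both m₁(H − e) ≤ t and (v_H − 2) − (e_H − 1)/t ≥ −1/m(R,G) hold. Then m(R, (R,G)×(e,H−e)) ≤ t. -/
open Filter Asymptotics
open scoped Classical ENNReal

noncomputable section

namespace OG

/-! ### Finite graphs, represented as subgraphs of a complete graph -/

abbrev Sub (W : Type*) := (⊤ : SimpleGraph W).Subgraph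

variable {W U X : Type*}

/-- number of vertices -/
def nverts (G : Sub W) : ℕ := G.verts.ncard

/-- number of edges -/
def nedges (G : Sub W) : ℕ := G.edgeSet.ncard

/-- the density `d(G) = e_G / v_G` -/
def dd (G : Sub W) : ℝ := (nedges G : ℝ) / (nverts G : ℝ)

/-- the `1`-density `d₁(G) = e_G / (v_G - 1)` -/
def d1 (G : Sub W) : ℝ := (nedges G : ℝ) / ((nverts G : ℝ) - 1)

/-- the `2`-density `d₂(G) = (e_G - 1)/(v_G - 2)` -/
def d2 (G : Sub W) : ℝ := ((nedges G : ℝ) - 1) / ((nverts G : ℝ) - 2)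

/-- `m(G) = max_{H ⊆ G} d(H)` -/
def mD (G : Sub W) : ℝ := ⨆ H : {H : Sub W // H ≤ G}, dd H.1

/-- `m₁(G) = max_{H ⊆ G} d₁(H)` -/
def m1D (G : Sub W) : ℝ := ⨆ H : {H : Sub W // H ≤ G}, d1 H.1

/-- `m₂(G) = max_{H ⊆ G} d₂(H)` (over subgraphs with at least one edge;
on edgeless subgraphs the convention `0/0 = 0` applies) -/
def m2D (G : Sub W) : ℝ := ⨆ H : {H : Sub W // H ≤ G ∧ 1 ≤ nedges H}, d2 H.1

/-- `G` is 2-balanced if `m₂(G) = d₂(G)`. -/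
def TwoBalanced (G : Sub W) : Prop := m2D G = d2 G

/-- the recursively defined densities `m̄ʳ₂(G)`. -/
def mbar (G : Sub W) : ℕ → ℝ
  | 0 => 0
  | 1 => mD G
  | k + 2 => ⨆ H : {H : Sub W // H ≤ G},
      (nedges H.1 : ℝ) / ((nverts H.1 : ℝ) - 2 + 1 / mbar G (k + 1))

/-- view a `SimpleGraph` on a vertex type `V` as a graph with vertex set all of `V`. -/
def toSub {V : Type*} (G : SimpleGraph V) : Sub V where
  verts := Set.univ
  Adj := G.Adj
  adj_sub := fun h => G.ne_of_adj h
  edge_vert := fun _ => Set.mem_univ _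
  symm := G.symm

/-! ### Rooted graphs -/

/-- number of edges of `G` inside the root set `R`, i.e. `e_{G[R]}`. -/
def rInEdges (R : Set W) (G : Sub W) : ℕ := {e ∈ G.edgeSet | ∀ x ∈ e, x ∈ R}.ncard

/-- the density `d(R,G) = ē_G / v̄_G` of a rooted graph (with the roots `R ∩ V(G)`). -/
def rdd (R : Set W) (G : Sub W) : ℝ :=
  ((nedges G : ℝ) - (rInEdges R G : ℝ)) / ((nverts G : ℝ) - ((G.verts ∩ R).ncard : ℝ))

/-- `m(R,G) = max_{H ⊆ G} d(R ∩ V(H), H)` -/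
def mRooted (R : Set W) (G : Sub W) : ℝ := ⨆ H : {H : Sub W // H ≤ G}, rdd R H.1

/-- a rooted graph is balanced if its density attains `m(R,G)`. -/
def BalancedRooted (R : Set W) (G : Sub W) : Prop := mRooted R G = rdd R G

/-- the rooted `2`-density `d₂(R,G,t)`, valued in `ℝ≥0∞`. -/
def d2t (R : Set W) (G : Sub W) (t : ℝ) : ℝ≥0∞ :=
  if 0 < (nverts G : ℝ) - 2 - t * (rInEdges R G : ℝ) then
    ENNReal.ofReal ((((nedges G : ℝ) - (rInEdges R G : ℝ)) - 1) /
      ((nverts G : ℝ) - 2 - t * (rInEdges R G : ℝ)))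
  else ⊤

/-- `m₂(R,G,t)`, the maximum of `d₂(R ∩ V(H), H, t)` over subgraphs `H ⊆ G` with `ē_H > 1`. -/
def m2t (R : Set W) (G : Sub W) (t : ℝ) : ℝ≥0∞ :=
  ⨆ H : {H : Sub W // H ≤ G ∧ rInEdges R H + 2 ≤ nedges H}, d2t R H.1 t


/-! ### Products of rooted graphs and the families 𝓕ᵏ -/

/-- `e` is a non-root edge of `Fg` w.r.t. the root set `R`. -/
def NRe (Fg : Sub W) (R : Set W) (e : Sym2 W) : Prop := e ∈ Fg.edgeSet ∧ ¬ ∀ x ∈ e, x ∈ R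

/-- `P` (together with the placement maps `φ`, `ψ`) is a copy of the product `(R,Fg) × (h₁h₂, H)`:
it is obtained from `Fg` by attaching to every non-root edge of `Fg` a new copy of `H`,
rooted at that edge (the edge itself being kept iff `h₁h₂ ∈ E(H)`). -/
def IsProdCopyData (Fg : Sub W) (R : Set W) (H : Sub U) (h₁ h₂ : U) (P : Sub X)
    (φ : W → X) (ψ : Sym2 W → U → X) : Prop :=
  Set.InjOn φ Fg.verts ∧
  (∀ e, NRe Fg R e → Set.InjOn (ψ e) H.verts) ∧
  (∀ e, NRe Fg R e → ∀ x y : W, e = s(x, y) →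
      ({ψ e h₁, ψ e h₂} : Set X) = {φ x, φ y}) ∧
  (∀ e e', NRe Fg R e → NRe Fg R e' → e ≠ e' →
      Disjoint (ψ e '' (H.verts \ {h₁, h₂})) (ψ e' '' (H.verts \ {h₁, h₂}))) ∧
  (∀ e, NRe Fg R e → Disjoint (ψ e '' (H.verts \ {h₁, h₂})) (φ '' Fg.verts)) ∧
  (P.verts = φ '' Fg.verts ∪ ⋃ e ∈ {e | NRe Fg R e}, ψ e '' H.verts) ∧
  (∀ x y, P.Adj x y ↔
    ((∃ p q, Fg.Adj p q ∧ p ∈ R ∧ q ∈ R ∧ x = φ p ∧ y = φ q) ∨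
      ∃ e, NRe Fg R e ∧ ∃ p q, H.Adj p q ∧ x = ψ e p ∧ y = ψ e q))

/-- `P` is a copy of the product `(R,Fg) × (h₁h₂, H)` placed by `φ`. -/
def IsProdCopy (Fg : Sub W) (R : Set W) (H : Sub U) (h₁ h₂ : U) (P : Sub X) (φ : W → X) : Prop :=
  ∃ ψ, IsProdCopyData Fg R H h₁ h₂ P φ ψ

/-- `InF F u v k G a b` : the graph `G` rooted at `(a, b)` is (a copy of) a member of
the family `𝓕ᵏ` built from the graph `F` with distinguished edge `{u,v}`.
`𝓕¹` consists of a single edge rooted at its endpoints, and for `k ≥ 2`,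
`𝓕ᵏ = { ⊔_{1 ≤ i < k} (e,F)×(eᵢ,Fᵢ*) : Fᵢ* ∈ 𝓕^{≤i} }`, the parts being joined
at the common roots and otherwise disjoint. -/
inductive InF (F : Sub ℕ) (u v : ℕ) : ℕ → Sub ℕ → ℕ → ℕ → Prop
  | base (a b : ℕ) (G : Sub ℕ) (hab : a ≠ b) (hv : G.verts = {a, b})
      (he : G.edgeSet = {s(a, b)}) : InF F u v 1 G a b
  | step (k a b : ℕ) (P : ℕ → Sub ℕ) (G : Sub ℕ)
      (j : ℕ → ℕ) (Fi : ℕ → Sub ℕ) (c d : ℕ → ℕ) (φ : ℕ → ℕ → ℕ)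
      (hk : 2 ≤ k)
      (hj : ∀ i, 1 ≤ i → i < k → 1 ≤ j i ∧ j i ≤ i)
      (hrec : ∀ i, 1 ≤ i → i < k → InF F u v (j i) (Fi i) (c i) (d i))
      (hprod : ∀ i, 1 ≤ i → i < k →
        IsProdCopy F {u, v} (Fi i) (c i) (d i) (P i) (φ i) ∧
          ({φ i u, φ i v} : Set ℕ) = {a, b})
      (hdisj : ∀ i i', 1 ≤ i → i < k → 1 ≤ i' → i' < k → i ≠ i' →
        (P i).verts ∩ (P i').verts = {a, b})
      (hG : G = ⨆ i ∈ Set.Ico 1 k, P i) : InF F u v k G a b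

/-- membership in `𝓕^{≤ m} = ∪_{1 ≤ j ≤ m} 𝓕ʲ`. -/
def InFle (F : Sub ℕ) (u v : ℕ) (m : ℕ) (G : Sub ℕ) (a b : ℕ) : Prop :=
  ∃ j, 1 ≤ j ∧ j ≤ m ∧ InF F u v j G a b


/-! ### Partite graphs, regularity -/

/-- number of edges of a `SimpleGraph`. -/
def eCnt {V : Type*} (G : SimpleGraph V) : ℕ := G.edgeSet.ncard

/-- number of edges of `G` having all endpoints inside `R`, i.e. `e_{G[R]}`. -/
def eIn {V : Type*} (G : SimpleGraph V) (R : Finset V) : ℕ :=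
  {e ∈ G.edgeSet | ∀ x ∈ e, x ∈ R}.ncard

/-- `F₋`: the graph `F` with all edges inside the root set `R` removed. -/
def Fm {V : Type*} (F : SimpleGraph V) (R : Finset V) : SimpleGraph V :=
  F.deleteEdges {e | ∀ x ∈ e, x ∈ R}

/-- edge density of the bipartite pair `(s,t)` in `G`. -/
def bidensity {V : Type*} (G : SimpleGraph V) (s t : Finset V) : ℝ :=
  ({pq : V × V | pq.1 ∈ s ∧ pq.2 ∈ t ∧ G.Adj pq.1 pq.2}.ncard : ℝ) /
    ((s.card : ℝ) * (t.card : ℝ))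

/-- the pair `(s,t)` is `(ε)`-regular in `G`: for all `s' ⊆ s`, `t' ⊆ t` with
`|s'| ≥ ε|s|`, `|t'| ≥ ε|t|` the density deviates by at most `ε` times the density of the pair. -/
def EpsRegular {V : Type*} (G : SimpleGraph V) (ε : ℝ) (s t : Finset V) : Prop :=
  ∀ s' t' : Finset V, s' ⊆ s → t' ⊆ t → ε * s.card ≤ s'.card → ε * t.card ≤ t'.card →
    |bidensity G s' t' - bidensity G s t| ≤ ε * bidensity G s t

/-- the `i`-th vertex class `V_i` of the canonical `|ι|`-partite vertex set `ι × Fin n`. -/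
def prt (ι : Type*) [Fintype ι] (n : ℕ) (i : ι) : Finset (ι × Fin n) :=
  Finset.univ.filter fun pq => pq.1 = i

variable {ι : Type*} [Fintype ι]

/-- `G` is partite w.r.t. `Fm`: its edges run only between vertex classes
corresponding to edges of `Fm`. -/
def partiteOn (Fmg : SimpleGraph ι) (n : ℕ) (G : SimpleGraph (ι × Fin n)) : Prop :=
  ∀ x y, G.Adj x y → Fmg.Adj x.1 y.1

/-- number of edges of `G` between the classes `V_i` and `V_j`. -/
def ebp (n : ℕ) (G : SimpleGraph (ι × Fin n)) (i j : ι) : ℕ :=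
  {pq : (ι × Fin n) × (ι × Fin n) | pq.1.1 = i ∧ pq.2.1 = j ∧ G.Adj pq.1 pq.2}.ncard

/-- `G ∈ 𝓖(Fmg, n, m, ε)`: `G` is `Fmg`-partite, with exactly `m` edges between classes
joined by an edge of `Fmg`, all such pairs being `(ε)`-regular. -/
def inG (Fmg : SimpleGraph ι) (n m : ℕ) (ε : ℝ) (G : SimpleGraph (ι × Fin n)) : Prop :=
  partiteOn Fmg n G ∧
    ∀ i j, Fmg.Adj i j → ebp n G i j = m ∧ EpsRegular G ε (prt ι n i) (prt ι n j)

/-- `G_R` is `(F,q,ε)`-lower-regular. -/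
def LowerReg (F : SimpleGraph ι) (R : Finset ι) (n : ℕ) (GR : Finset ((↥R) → Fin n))
    (q ε : ℝ) : Prop :=
  ∀ Wf : (↥R) → Finset (Fin n), (∀ i, ε * n ≤ ((Wf i).card : ℝ)) →
    q ^ eIn F R * ∏ i, ((Wf i).card : ℝ) ≤ ((GR.filter fun e => ∀ i, e i ∈ Wf i).card : ℝ)

/-- `G_R` is `(F,q)`-upper-extensible. -/
def UpperExt (F : SimpleGraph ι) (R : Finset ι) (n : ℕ) (GR : Finset ((↥R) → Fin n))
    (q : ℝ) : Prop :=
  ∀ S : Finset ι, S ⊆ R → ∀ g : ι → Fin n,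
    ((GR.filter fun e => ∀ i : ↥R, (i : ι) ∈ S → e i = g (i : ι)).card : ℝ) ≤
      q ^ (eIn F R - eIn F S) * (n : ℝ) ^ (R.card - S.card)

/-- the number of edges, counted with multiplicity, of the multi-hypergraph `T(G, G_R)`:
for each `e ∈ G_R` the number of partite copies of `F₋` in `G` containing the vertices of `e`. -/
def Tcount (F : SimpleGraph ι) (R : Finset ι) (n : ℕ) (G : SimpleGraph (ι × Fin n))
    (GR : Finset ((↥R) → Fin n)) : ℕ :=
  ∑ e ∈ GR, {f : ι → Fin n |
      (∀ i j, (Fm F R).Adj i j → G.Adj (i, f i) (j, f j)) ∧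
      ∀ i : ↥R, f (i : ι) = e i}.ncard

/-! ### The hypergraph 𝓔(G_R, F) and its co-degree function -/

/-- the edge set of the partite copy of `Fmg` given by the transversal `f`. -/
def copyEdges (Fmg : SimpleGraph ι) {n : ℕ} (f : ι → Fin n) : Set (Sym2 (ι × Fin n)) :=
  Sym2.map (fun i => (i, f i)) '' Fmg.edgeSet

/-- the degree in `𝓔(G_R,F)` of a set `σ` of vertices (i.e. of edges of `K_{F₋,n}`):
the number of partite copies of `F₋` whose roots form an edge of `G_R` and whose
edge set contains `σ`. -/
def degI (F : SimpleGraph ι) (R : Finset ι) {n : ℕ} (GR : Finset ((↥R) → Fin n))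
    (σ : Finset (Sym2 (ι × Fin n))) : ℕ :=
  {pf : ((↥R) → Fin n) × (ι → Fin n) |
    pf.1 ∈ GR ∧ (∀ i : ↥R, pf.2 (i : ι) = pf.1 i) ∧ ↑σ ⊆ copyEdges (Fm F R) pf.2}.ncard

/-- `d^{(j)}(v)`: the maximal degree of a `j`-set containing `v`. -/
def djI (F : SimpleGraph ι) (R : Finset ι) {n : ℕ} (GR : Finset ((↥R) → Fin n))
    (jj : ℕ) (v : Sym2 (ι × Fin n)) : ℕ :=
  ⨆ σ : {σ : Finset (Sym2 (ι × Fin n)) // v ∈ σ ∧ σ.card = jj}, degI F R GR σ.1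

/-- the co-degree function `δ(𝓔(G_R,F), τ)` of Saxton–Thomason. -/
def codegFn (F : SimpleGraph ι) (R : Finset ι) {n : ℕ} (GR : Finset ((↥R) → Fin n))
    (τ : ℝ) : ℝ :=
  if (∑ v : Sym2 (ι × Fin n), degI F R GR {v}) = 0 then 0 else
    (2 : ℝ) ^ ((eCnt (Fm F R)).choose 2 - 1) *
      ∑ jj ∈ Finset.Icc 2 (eCnt (Fm F R)),
        ((∑ v : Sym2 (ι × Fin n), (djI F R GR jj v : ℝ)) /
            (τ ^ (jj - 1) * ∑ v : Sym2 (ι × Fin n), (degI F R GR {v} : ℝ))) *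
          ((2 : ℝ) ^ ((jj - 1).choose 2))⁻¹


/-! ### The online F-avoidance game -/

/-- the edges of the complete graph `K_n`. -/
abbrev En (n : ℕ) := {e : Sym2 (Fin n) // ¬ e.IsDiag}

/-- a (deterministic) Painter strategy: given the history of previously presented
edges together with their colors, and the newly presented edge, pick a color. -/
abbrev Strategy (n r : ℕ) := List (En n × Fin r) → En n → Fin r

/-- the history (presented edges with their colors, in order) after `N` rounds of
the game in which the edges arrive in the order `π` and Painter plays `σ`. -/
def histF {n r : ℕ} (σ : Strategy n r) (π : Fin (Nat.choose n 2) → En n) :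
    ℕ → List (En n × Fin r)
  | 0 => []
  | i + 1 =>
      histF σ π i ++
        if h : i < Nat.choose n 2 then
          [(π ⟨i, h⟩, σ (histF σ π i) (π ⟨i, h⟩))]
        else []

/-- the edge `e` occurs in the history `L` with color `c`. -/
def ListColored {n r : ℕ} (L : List (En n × Fin r)) (e : Sym2 (Fin n)) (c : Fin r) : Prop :=
  ∃ pr ∈ L, (pr.1 : Sym2 (Fin n)) = e ∧ pr.2 = c

/-- the graph of all edges of color `c` in the history `L`. -/
def colorGraphL {n r : ℕ} (L : List (En n × Fin r)) (c : Fin r) : SimpleGraph (Fin n) :=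
  SimpleGraph.fromEdgeSet {e | ListColored L e c}

/-- the graph of all presented edges in the history `L`. -/
def presentedGraphL {n r : ℕ} (L : List (En n × Fin r)) : SimpleGraph (Fin n) :=
  SimpleGraph.fromEdgeSet {e | ∃ c, ListColored L e c}

/-- the graph of edges colored `c` after `N` rounds. -/
def colorGraph {n r : ℕ} (σ : Strategy n r) (π : Fin (Nat.choose n 2) → En n) (N : ℕ)
    (c : Fin r) : SimpleGraph (Fin n) :=
  colorGraphL (histF σ π N) c

/-- the probability, under an edge ordering chosen uniformly at random among all
`(n choose 2)!` orderings of the edges of `K_n`, of the event `P`. -/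
def gameProb (n : ℕ) (P : (Fin (Nat.choose n 2) → En n) → Prop) : ℝ :=
  ({π : Fin (Nat.choose n 2) → En n | Function.Bijective π ∧ P π}.ncard : ℝ) /
    ({π : Fin (Nat.choose n 2) → En n | Function.Bijective π}.ncard : ℝ)

/-- some color class after `N` rounds contains a copy of the (finite) graph `F`. -/
def MonoCopy (F : Sub ℕ) {n r : ℕ} (σ : Strategy n r) (π : Fin (Nat.choose n 2) → En n)
    (N : ℕ) : Prop :=
  ∃ (c : Fin r) (φ : ℕ → Fin n), Set.InjOn φ F.verts ∧
    ∀ x y, F.Adj x y → (colorGraph σ π N c).Adj (φ x) (φ y)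

/-- Painter survives `N` rounds: after `N` edges have been presented and colored,
no color class contains a copy of `F`. -/
def Survive {α : Type*} (F : SimpleGraph α) {n r : ℕ} (σ : Strategy n r)
    (π : Fin (Nat.choose n 2) → En n) (N : ℕ) : Prop :=
  ∀ c : Fin r, ¬ ∃ φ : α ↪ Fin n, ∀ x y, F.Adj x y → (colorGraph σ π N c).Adj (φ x) (φ y)

/-! ### The binomial random graph -/

/-- probability of the event `P` for the binomial random graph `G(n,p)`. -/
def gnpProb (n : ℕ) (p : ℝ) (P : SimpleGraph (Fin n) → Prop) : ℝ :=
  ∑ G : SimpleGraph (Fin n),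
    if P G then p ^ eCnt G * (1 - p) ^ (Nat.choose n 2 - eCnt G) else 0

/-- the number of copies of the rooted graph `(ρ, G)` (with ordered roots `ρ`) spanned by
the tuple `f` in `Γ`: embeddings of `G - G[R]` carrying the roots `ρ` to `f` in order. -/
def spanCount {α : Type*} (G : SimpleGraph α) {k : ℕ} (ρ : Fin k ↪ α) {n : ℕ}
    (Γ : SimpleGraph (Fin n)) (f : Fin k ↪ Fin n) : ℕ :=
  {φ : α → Fin n | Function.Injective φ ∧ (∀ i, φ (ρ i) = f i) ∧
    ∀ x y, G.Adj x y → ¬(x ∈ Set.range ρ ∧ y ∈ Set.range ρ) → Γ.Adj (φ x) (φ y)}.ncard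

/-! ### F*-spanning subgraphs, upper uniformity -/

/-- `G` is an `F*`-spanning subgraph of `Γ` (where `F*` is rooted at `a, b`):
every edge of `G` is the root pair of a copy of `F*` in `Γ` whose non-root vertices
avoid `V(G)`, these copies being pairwise edge-disjoint. -/
def FStarSpanning {n : ℕ} (Fs : Sub ℕ) (a b : ℕ) (Γ : SimpleGraph (Fin n))
    (G : Sub (Fin n)) : Prop :=
  ∃ κ : Sym2 (Fin n) → ℕ → Fin n,
    (∀ e ∈ G.edgeSet, Set.InjOn (κ e) Fs.verts) ∧
    (∀ e ∈ G.edgeSet, ∀ x y : Fin n, e = s(x, y) →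
      ({κ e a, κ e b} : Set (Fin n)) = {x, y}) ∧
    (∀ e ∈ G.edgeSet, ∀ w ∈ Fs.verts, w ≠ a → w ≠ b → κ e w ∉ G.verts) ∧
    (∀ e ∈ G.edgeSet, ∀ w w', Fs.Adj w w' → Γ.Adj (κ e w) (κ e w')) ∧
    (∀ e ∈ G.edgeSet, ∀ e' ∈ G.edgeSet, e ≠ e' →
      Disjoint (Sym2.map (κ e) '' Fs.edgeSet) (Sym2.map (κ e') '' Fs.edgeSet))

/-- number of edges of `G` from `s` to `t`. -/
def eBetween {V : Type*} (G : Sub V) (s t : Set V) : ℕ :=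
  {pq : V × V | pq.1 ∈ s ∧ pq.2 ∈ t ∧ G.Adj pq.1 pq.2}.ncard

/-- `G` is `(η,q)`-upper-uniform. -/
def UpperUniform {V : Type*} (G : Sub V) (η q : ℝ) : Prop :=
  ∀ s t : Set V, s ⊆ G.verts → t ⊆ G.verts → Disjoint s t →
    η * (nverts G : ℝ) ≤ (s.ncard : ℝ) → η * (nverts G : ℝ) ≤ (t.ncard : ℝ) →
    (eBetween G s t : ℝ) ≤ (1 + η) * q * (s.ncard : ℝ) * (t.ncard : ℝ)

/-! ### Dangerous copies -/

/-- `col` is a dangerous `r`-coloring of `F*₋` for `F* ∈ 𝓕ᵏ` (rooted at `a,b`):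
for some decomposition of `F*` as in the construction of `𝓕ᵏ`, the `k-1` copies of
`F₋` whose roots were identified in the construction are monochromatic, with pairwise
different colors. -/
def DangerousColoring (F : Sub ℕ) (u v : ℕ) (k : ℕ) (Fs : Sub ℕ) (a b : ℕ) (r : ℕ)
    (col : Sym2 ℕ → Fin r) : Prop :=
  k = 1 ∨ ∃ (P : ℕ → Sub ℕ) (c : ℕ → Fin r),
    Fs = (⨆ i ∈ Set.Ico 1 k, P i) ∧
    (∀ i ∈ Set.Ico 1 k, ∀ i' ∈ Set.Ico 1 k, i ≠ i' →
      c i ≠ c i' ∧ (P i).verts ∩ (P i').verts = {a, b}) ∧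
    ∀ i ∈ Set.Ico 1 k, ∃ (j : ℕ) (Fi : Sub ℕ) (c' d' : ℕ) (φ : ℕ → ℕ),
      1 ≤ j ∧ j ≤ i ∧ InF F u v j Fi c' d' ∧
      IsProdCopy F {u, v} Fi c' d' (P i) φ ∧ ({φ u, φ v} : Set ℕ) = {a, b} ∧
      ∀ x y, F.Adj x y → ¬(x ∈ ({u, v} : Set ℕ) ∧ y ∈ ({u, v} : Set ℕ)) →
        col (s(φ x, φ y)) = c i

/-- `P` is a dangerous copy of `F × (e, F*₋)` in the colored graph after `N` rounds:
a copy of the product of `F` (all edges of `F` being used) with `F*₋` rooted at `(a,b)`,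
all of whose attached copies of `F*₋` are colored according to one and the same
dangerous coloring. -/
def IsDangerousCopy (F : Sub ℕ) (u v : ℕ) (r : ℕ) (Fs : Sub ℕ) (a b : ℕ) {n : ℕ}
    (σ : Strategy n r) (π : Fin (Nat.choose n 2) → En n) (N : ℕ) (P : Sub (Fin n)) : Prop :=
  ∃ (φ : ℕ → Fin n) (ψ : Sym2 ℕ → ℕ → Fin n) (col : Sym2 ℕ → Fin r),
    IsProdCopyData F ∅ (Fs.deleteEdges {s(a, b)}) a b P φ ψ ∧
    DangerousColoring F u v r Fs a b r col ∧
    ∀ e, NRe F ∅ e → ∀ x y, (Fs.deleteEdges {s(a, b)}).Adj x y →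
      ListColored (histF σ π N) (s(ψ e x, ψ e y)) (col (s(x, y)))

/-! ### The multi-phase game -/

/-- one phase of the multi-phase game: the edges of `K_n` are scanned in the order `π`;
those belonging to the phase graph `Gph` and not previously presented are presented to
Painter (playing `σ`), who colors them immediately. -/
def phaseStep {n r : ℕ} (σ : Strategy n r) (Gph : SimpleGraph (Fin n))
    (π : Fin (Nat.choose n 2) → En n) (init : List (En n × Fin r)) :
    ℕ → List (En n × Fin r)
  | 0 => init
  | jj + 1 =>
      let L := phaseStep σ Gph π init jj
      if h : jj < Nat.choose n 2 then
        if (((π ⟨jj, h⟩ : En n) : Sym2 (Fin n)) ∈ Gph.edgeSet ∧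
            ∀ pr ∈ L, pr.1 ≠ π ⟨jj, h⟩) then
          L ++ [(π ⟨jj, h⟩, σ L (π ⟨jj, h⟩))]
        else L
      else L

/-- the history after the first `i` phases of the multi-phase game with phase graphs `Gs`
and phase edge-orderings `πs`. -/
def multiHist {n r k : ℕ} (σ : Strategy n r) (Gs : Fin k → SimpleGraph (Fin n))
    (πs : Fin k → Fin (Nat.choose n 2) → En n) : ℕ → List (En n × Fin r)
  | 0 => []
  | i + 1 =>
      if h : i < k then
        phaseStep σ (Gs ⟨i, h⟩) (πs ⟨i, h⟩) (multiHist σ Gs πs i) (Nat.choose n 2)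
      else multiHist σ Gs πs i

/-- probability of the event `P` when `k` independent copies of `G(n,p)` are sampled,
each with an independent uniformly random ordering of the edges of `K_n`. -/
def phasesProb (n k : ℕ) (p : ℝ)
    (P : (Fin k → SimpleGraph (Fin n)) → (Fin k → Fin (Nat.choose n 2) → En n) → Prop) : ℝ :=
  (∑ Gs : Fin k → SimpleGraph (Fin n), ∑ πs : Fin k → Fin (Nat.choose n 2) → En n,
      if (∀ i, Function.Bijective (πs i)) ∧ P Gs πs then
        ∏ i, p ^ eCnt (Gs i) * (1 - p) ^ (Nat.choose n 2 - eCnt (Gs i))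
      else 0) /
    ({π : Fin (Nat.choose n 2) → En n | Function.Bijective π}.ncard : ℝ) ^ k

/-- witness data for Lemma `force regular`: a `t`-partite graph `G` with classes `parts`
of size `nn`, `m` edges between classes, monochromatic in color `col`, which is
`F*`-spanning for the member `(Fs, a, b)` of `𝓕^{≤|S|+1}`. -/
structure Wit (n r t : ℕ) where
  parts : Fin t → Finset (Fin n)
  G : Sub (Fin n)
  col : Fin r
  nn : ℕ
  m : ℕ
  Fs : Sub ℕ
  a : ℕ
  b : ℕ

/-- validity of a witness for Lemma `force regular` (see `Wit`). -/
def WitValid (F : Sub ℕ) (u v : ℕ) {n r t k : ℕ} (S : Finset (Fin r)) (ε η pn : ℝ)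
    (σ : Strategy n r) (Gs : Fin k → SimpleGraph (Fin n))
    (πs : Fin k → Fin (Nat.choose n 2) → En n) (w : Wit n r t) : Prop :=
  w.col ∉ S ∧
  (∃ jj : ℕ, 1 ≤ jj ∧ jj ≤ S.card + 1 ∧ InF F u v jj w.Fs w.a w.b) ∧
  η * (n : ℝ) ≤ (w.nn : ℝ) ∧
  η * (n : ℝ) ^ nverts w.Fs * pn ^ nedges w.Fs ≤ (w.m : ℝ) ∧
  (∀ i, (w.parts i).card = w.nn) ∧
  (∀ i i', i ≠ i' → Disjoint (w.parts i) (w.parts i')) ∧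
  (∀ x y, w.G.Adj x y → ∃ i i', i ≠ i' ∧ x ∈ w.parts i ∧ y ∈ w.parts i') ∧
  (∀ i i', i ≠ i' → eBetween w.G (↑(w.parts i)) (↑(w.parts i')) = w.m ∧
      EpsRegular w.G.spanningCoe ε (w.parts i) (w.parts i')) ∧
  w.G.verts = ⋃ i, ↑(w.parts i) ∧
  (∀ x y, w.G.Adj x y → ListColored (multiHist σ Gs πs k) (s(x, y)) w.col) ∧
  FStarSpanning w.Fs w.a w.b (presentedGraphL (multiHist σ Gs πs k)) w.G

/-- an equitable partition of `Fin n` into `rr` classes. -/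
def Equitable {n rr : ℕ} (P : Fin n → Fin rr) : Prop :=
  ∀ x y : Fin rr, (P ⁻¹' {x}).ncard ≤ (P ⁻¹' {y}).ncard + 1

/-- edges of the simple graph `C` between `s` and `t`. -/
def eBetweenS {V : Type*} (C : SimpleGraph V) (s t : Set V) : ℕ :=
  {pq : V × V | pq.1 ∈ s ∧ pq.2 ∈ t ∧ C.Adj pq.1 pq.2}.ncard

/-!
Fix a subgraph `Q` of the product and let `S` be the set of vertices of `G` whose image lies in
`Q`. The non-root vertices and edges of `Q` split into those of `φ(S \ R)` and, for every
non-root edge `e` of `G`, those of the part `K_e` of `Q` inside the copy of `H - e` attached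
to `e`. If `e` does not lie inside `S`, then `K_e` misses a root, and `m₁(H - e) ≤ t` gives
`e(K_e) ≤ t v̄(K_e)`. In any case, balancedness of `(e, H)` gives
`e(K_e) ≤ d(e, H) v̄(K_e)`, which the hypothesis on `t` turns into
`e(K_e) ≤ t v̄(K_e) + t / m(R, G)`. There are at most `m(R, G) |S \ R|` non-root edges of `G`
inside `S`, so summing over `e` gives `ē(Q) ≤ t v̄(Q)`.
-/

theorem _root_.Set.InjOn.sym2_map {α β : Type*} {f : α → β} {s : Set α} (hf : Set.InjOn f s) :
    Set.InjOn (Sym2.map f) s.sym2 := by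
  intro z hz z' hz' h
  induction z using Sym2.inductionOn with | _ a b => ?_
  induction z' using Sym2.inductionOn with | _ c d => ?_
  simp only [Set.mk_mem_sym2_iff, Sym2.map_mk, Sym2.eq_iff] at hz hz' h ⊢
  rcases h with ⟨hac, hbd⟩ | ⟨had, hbc⟩
  · exact .inl ⟨hf hz.1 hz'.1 hac, hf hz.2 hz'.2 hbd⟩
  · exact .inr ⟨hf hz.1 hz'.2 had, hf hz.2 hz'.1 hbc⟩

theorem edgeSet_subset_sym2 (G : Sub W) : G.edgeSet ⊆ G.verts.sym2 :=
  fun _ he => Set.mem_sym2_iff_subset.mpr fun _ hx => G.mem_verts_of_mem_edge he hx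

theorem edgeSet_finite {G : Sub W} (h : G.verts.Finite) : G.edgeSet.Finite := by
  refine Set.Finite.subset ?_ (edgeSet_subset_sym2 G)
  rw [Set.sym2_eq_mk_image]
  exact (h.prod h).image _

theorem finite_subgraphs {G : Sub W} (h : G.verts.Finite) : Finite {K : Sub W // K ≤ G} := by
  have : Finite (𝒫 G.verts ×ˢ 𝒫 G.edgeSet : Set (Set W × Set (Sym2 W))) :=
    (h.powerset.prod (edgeSet_finite h).powerset).to_subtype
  refine Finite.of_injective (β := (𝒫 G.verts ×ˢ 𝒫 G.edgeSet : Set (Set W × Set (Sym2 W))))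
    (fun K => ⟨(K.1.verts, K.1.edgeSet), K.2.1, SimpleGraph.Subgraph.edgeSet_mono K.2⟩) ?_
  intro K₁ K₂ hK
  obtain ⟨hv, he⟩ : K₁.1.verts = K₂.1.verts ∧ K₁.1.edgeSet = K₂.1.edgeSet :=
    Prod.mk.inj (congrArg Subtype.val hK)
  refine Subtype.ext (SimpleGraph.Subgraph.ext hv ?_)
  ext x y
  rw [← SimpleGraph.Subgraph.mem_edgeSet, ← SimpleGraph.Subgraph.mem_edgeSet, he]

theorem rdd_le_mRooted (S : Set W) {G K : Sub W} (hG : G.verts.Finite) (hK : K ≤ G) :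
    rdd S K ≤ mRooted S G :=
  have := finite_subgraphs hG
  le_ciSup (f := fun K : {K : Sub W // K ≤ G} => rdd S K.1) (Set.finite_range _).bddAbove
    ⟨K, hK⟩

theorem d1_le_m1D {G K : Sub W} (hG : G.verts.Finite) (hK : K ≤ G) : d1 K ≤ m1D G :=
  have := finite_subgraphs hG
  le_ciSup (f := fun K : {K : Sub W // K ≤ G} => d1 K.1) (Set.finite_range _).bddAbove ⟨K, hK⟩

theorem mRooted_le {S : Set W} {G : Sub W} {t : ℝ} (h : ∀ K ≤ G, rdd S K ≤ t) :
    mRooted S G ≤ t :=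
  have : Nonempty {K : Sub W // K ≤ G} := ⟨⟨⊥, bot_le⟩⟩
  ciSup_le fun K => h K.1 K.2

theorem nedges_sub_rInEdges (S : Set W) {K : Sub W} (hK : K.verts.Finite) :
    (nedges K : ℝ) - rInEdges S K = {e ∈ K.edgeSet | ¬ ∀ x ∈ e, x ∈ S}.ncard := by
  rw [nedges, rInEdges, ← Set.ncard_inter_add_ncard_sdiff_eq_ncard K.edgeSet
    {e | ∀ x ∈ e, x ∈ S} (edgeSet_finite hK)]
  push_cast
  exact add_sub_cancel_left _ _

theorem rdd_eq (S : Set W) {K : Sub W} (hK : K.verts.Finite) :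
    rdd S K = ((nedges K : ℝ) - rInEdges S K) / (K.verts \ S).ncard := by
  rw [rdd, nverts, ← Set.ncard_inter_add_ncard_sdiff_eq_ncard K.verts S hK]
  push_cast
  ring_nf

theorem nedges_sub_rInEdges_le {S : Set W} {K : Sub W} (hK : K.verts.Finite) {l : ℝ}
    (h : rdd S K ≤ l) : (nedges K : ℝ) - rInEdges S K ≤ l * (K.verts \ S).ncard := by
  rcases Nat.eq_zero_or_pos (K.verts \ S).ncard with h0 | hpos
  · have hsub : K.verts ⊆ S := Set.sdiff_eq_empty.mp ((Set.ncard_eq_zero hK.sdiff).mp h0)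
    have hempty : {e ∈ K.edgeSet | ¬ ∀ x ∈ e, x ∈ S} = ∅ := Set.eq_empty_of_forall_notMem
      fun e he => he.2 fun x hx => hsub (K.mem_verts_of_mem_edge he.1 hx)
    rw [nedges_sub_rInEdges S hK, hempty, h0]
    simp
  · rwa [rdd_eq S hK, div_le_iff₀ (by exact_mod_cast hpos)] at h

theorem nedges_le_of_d1_le {S : Set W} {K : Sub W} (hK : K.verts.Finite)
    (hS : (K.verts ∩ S).ncard ≤ 1) {t : ℝ} (ht : 0 ≤ t) (h : d1 K ≤ t) :
    (nedges K : ℝ) ≤ t * (K.verts \ S).ncard := by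
  rcases Nat.eq_zero_or_pos (nedges K) with h0 | hpos
  · rw [h0, Nat.cast_zero]
    positivity
  obtain ⟨e, he⟩ := Set.nonempty_of_ncard_ne_zero hpos.ne'
  induction e using Sym2.inductionOn with | _ p q => ?_
  have hpq : p ≠ q := K.adj_sub he
  have hv : 1 < K.verts.ncard :=
    (Set.one_lt_ncard hK).mpr ⟨p, K.edge_vert he, q, K.edge_vert he.symm, hpq⟩
  have hv' : (1 : ℝ) < nverts K := by exact_mod_cast hv
  have hsplit : (nverts K : ℝ) = (K.verts ∩ S).ncard + (K.verts \ S).ncard := by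
    exact_mod_cast (Set.ncard_inter_add_ncard_sdiff_eq_ncard K.verts S hK).symm
  have hS' : ((K.verts ∩ S).ncard : ℝ) ≤ 1 := by exact_mod_cast hS
  rw [d1, div_le_iff₀ (by linarith)] at h
  nlinarith

theorem _root_.Finset.set_ncard_biUnion {ι α : Type*} {N : Finset ι} {s : ι → Set α}
    (hs : ∀ i ∈ N, (s i).Finite) (h : (N : Set ι).PairwiseDisjoint s) :
    (⋃ i ∈ N, s i).ncard = ∑ i ∈ N, (s i).ncard := by
  rw [← finsum_mem_coe_finset]
  exact N.finite_toSet.ncard_biUnion hs h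

theorem card_nonroot_edges_le {G : Sub W} (hG : G.verts.Finite) {R S : Set W}
    (hS : S ⊆ G.verts) {N : Finset (Sym2 W)} (hN : ∀ e, e ∈ N ↔ NRe G R e) :
    ((N.filter fun e => ∀ x ∈ e, x ∈ S).card : ℝ) ≤ mRooted R G * (S \ R).ncard := by
  have hK : G.induce S ≤ G :=
    (SimpleGraph.Subgraph.induce_mono_right hS).trans SimpleGraph.Subgraph.induce_self_verts.le
  have hfin : (G.induce S).verts.Finite := hG.subset hS
  have h := nedges_sub_rInEdges_le hfin (rdd_le_mRooted R hG hK)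
  rw [nedges_sub_rInEdges R hfin] at h
  rw [← Set.ncard_coe_finset]
  convert h using 4
  · ext e
    induction e using Sym2.inductionOn with | _ p q => ?_
    simp only [Finset.coe_filter, hN, NRe, Set.mem_ofPred_eq, SimpleGraph.Subgraph.mem_edgeSet,
      SimpleGraph.Subgraph.induce_adj, Sym2.forall_mem_pair]
    tauto
  · rfl

section PairRooted

variable {H K : Sub W} {a b : W}

theorem eq_of_mem_edgeSet_of_subset_pair {e : Sym2 W} (he : e ∈ K.edgeSet)
    (h : ∀ x ∈ e, x ∈ ({a, b} : Set W)) : e = s(a, b) := by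
  induction e using Sym2.inductionOn with | _ p q => ?_
  have hpq : p ≠ q := K.adj_sub he
  have hp := h p (Sym2.mem_mk_left p q)
  have hq := h q (Sym2.mem_mk_right p q)
  simp only [Set.mem_insert_iff, Set.mem_singleton_iff] at hp hq
  rcases hp with rfl | rfl <;> rcases hq with rfl | rfl
  all_goals first | exact absurd rfl hpq | rfl | exact Sym2.eq_swap

theorem exists_notMem_pair_of_le_deleteEdges (hK : K ≤ H.deleteEdges {s(a, b)}) {e : Sym2 W}
    (he : e ∈ K.edgeSet) : ∃ x ∈ e, x ∉ ({a, b} : Set W) := by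
  by_contra! h
  induction e using Sym2.inductionOn with | _ p q => ?_
  have hdel := (SimpleGraph.Subgraph.deleteEdges_adj (s := {s(a, b)}) p q).mp (hK.2 he)
  exact hdel.2 (eq_of_mem_edgeSet_of_subset_pair he h)

theorem rInEdges_pair_of_le_deleteEdges (hK : K ≤ H.deleteEdges {s(a, b)}) :
    rInEdges {a, b} K = 0 := by
  have hempty : {e ∈ K.edgeSet | ∀ x ∈ e, x ∈ ({a, b} : Set W)} = ∅ :=
    Set.eq_empty_of_forall_notMem fun e ⟨he, hsub⟩ =>
      let ⟨x, hx, hxab⟩ := exists_notMem_pair_of_le_deleteEdges hK he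
      hxab (hsub x hx)
  rw [rInEdges, hempty, Set.ncard_empty]

theorem rdd_pair_of_adj (hab : H.Adj a b) :
    rdd {a, b} H = ((nedges H : ℝ) - 1) / ((nverts H : ℝ) - 2) := by
  have hroots : {e ∈ H.edgeSet | ∀ x ∈ e, x ∈ ({a, b} : Set W)} = {s(a, b)} := by
    refine Set.eq_singleton_iff_unique_mem.mpr ⟨⟨hab, ?_⟩, fun e he =>
      eq_of_mem_edgeSet_of_subset_pair he.1 he.2⟩
    intro x hx
    rcases Sym2.mem_iff.mp hx with rfl | rfl <;> simp
  have hpair : H.verts ∩ {a, b} = {a, b} :=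
    Set.inter_eq_self_of_subset_right (Set.pair_subset (H.edge_vert hab) (H.edge_vert hab.symm))
  rw [rdd, rInEdges, hroots, hpair, Set.ncard_singleton, Set.ncard_pair (H.adj_sub hab)]
  norm_num

theorem ncard_inter_pair_le_one {s : Set W} (h : ¬ (a ∈ s ∧ b ∈ s)) :
    (s ∩ {a, b}).ncard ≤ 1 := by
  refine (Set.ncard_le_one (Set.toFinite _)).mpr ?_
  rintro x ⟨hxs, hx⟩ y ⟨hys, hy⟩
  simp only [Set.mem_insert_iff, Set.mem_singleton_iff] at hx hy
  rcases hx with rfl | rfl <;> rcases hy with rfl | rfl <;> tauto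

end PairRooted

theorem nedges_le_of_balancedRooted {H K : Sub W} {h₁ h₂ : W} (hH : H.verts.Finite)
    (hadj : H.Adj h₁ h₂) (hbal : BalancedRooted {h₁, h₂} H)
    (hK : K ≤ H.deleteEdges {s(h₁, h₂)}) {t μ : ℝ} (ht : 0 < t) (hμ : 0 < μ)
    (hineq : -(1 / μ) ≤ ((nverts H : ℝ) - 2) - ((nedges H : ℝ) - 1) / t) :
    (nedges K : ℝ) ≤ t * (K.verts \ {h₁, h₂}).ncard + t / μ := by
  have hKH : K ≤ H := hK.trans (SimpleGraph.Subgraph.deleteEdges_le _)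
  set v : ℝ := ((K.verts \ {h₁, h₂}).ncard : ℝ)
  set D : ℝ := (nverts H : ℝ) - 2
  have hdens : (nedges K : ℝ) ≤ rdd {h₁, h₂} H * v := by
    have := nedges_sub_rInEdges_le (hH.subset hKH.1) ((rdd_le_mRooted _ hH hKH).trans hbal.le)
    rwa [rInEdges_pair_of_le_deleteEdges hK, Nat.cast_zero, sub_zero] at this
  have hvD : v ≤ D := by
    have hroots : {h₁, h₂} ⊆ H.verts :=
      Set.pair_subset (H.edge_vert hadj) (H.edge_vert hadj.symm)
    have hsplit := Set.ncard_sdiff_add_ncard_of_subset hroots hH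
    rw [Set.ncard_pair (H.adj_sub hadj)] at hsplit
    have hle : v ≤ (H.verts \ {h₁, h₂}).ncard := Nat.cast_le.mpr <|
      Set.ncard_le_ncard (Set.sdiff_subset_sdiff_left (t := {h₁, h₂}) hKH.1) hH.sdiff
    have hsplit' : ((H.verts \ {h₁, h₂}).ncard : ℝ) + 2 = nverts H := by exact_mod_cast hsplit
    linarith
  have hv_nonneg : (0 : ℝ) ≤ v := Nat.cast_nonneg _
  rcases hv_nonneg.eq_or_lt with hv0 | hvpos
  · rw [← hv0, mul_zero] at hdens
    rw [← hv0]
    linarith [div_pos ht hμ]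
  have hD : 0 < D := hvpos.trans_le hvD
  have hedges : (nedges H : ℝ) - 1 ≤ t * D + t / μ := by
    have := (div_le_iff₀ ht).mp (show ((nedges H : ℝ) - 1) / t ≤ D + 1 / μ by linarith)
    linarith [show (D + 1 / μ) * t = t * D + t / μ by ring]
  calc (nedges K : ℝ) ≤ ((nedges H : ℝ) - 1) / D * v := by rwa [rdd_pair_of_adj hadj] at hdens
    _ ≤ (t * D + t / μ) / D * v := by gcongr
    _ = t * v + t / μ * (v / D) := by field_simp
    _ ≤ t * v + t / μ * 1 := by gcongr; exact (div_le_one hD).mpr hvD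
    _ = t * v + t / μ := by ring

theorem nedges_le_of_m1D_le {H K : Sub W} {a b : W} (hH : H.verts.Finite) (hK : K ≤ H)
    {t : ℝ} (ht : 0 ≤ t) (hm1 : m1D H ≤ t) (hab : ¬ (a ∈ K.verts ∧ b ∈ K.verts)) :
    (nedges K : ℝ) ≤ t * (K.verts \ {a, b}).ncard :=
  nedges_le_of_d1_le (hH.subset hK.1) (ncard_inter_pair_le_one hab) ht
    ((d1_le_m1D hH hK).trans hm1)

section Pullback

def pullback (H : Sub U) (Q : Sub X) (f : U → X) : Sub U where
  verts := H.verts ∩ f ⁻¹' Q.verts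
  Adj a b := H.Adj a b ∧ Q.Adj (f a) (f b)
  adj_sub h := H.adj_sub h.1
  edge_vert h := ⟨H.edge_vert h.1, Q.edge_vert h.2⟩
  symm := ⟨fun _ _ h => ⟨h.1.symm, h.2.symm⟩⟩

variable {H : Sub U} {Q : Sub X} {f : U → X}

theorem pullback_le : pullback H Q f ≤ H := ⟨fun _ hx => hx.1, fun _ _ hadj => hadj.1⟩

theorem image_pullback_verts_sdiff (T : Set U) :
    f '' ((pullback H Q f).verts \ T) = f '' (H.verts \ T) ∩ Q.verts := by
  rw [← Set.image_inter_preimage]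
  exact congrArg _ Set.inter_sdiff_right_comm

theorem map_edgeSet_pullback_subset : Sym2.map f '' (pullback H Q f).edgeSet ⊆ Q.edgeSet := by
  rintro _ ⟨e, he, rfl⟩
  induction e using Sym2.inductionOn with
  | _ p q => exact (show (pullback H Q f).Adj p q from he).2

theorem edgeSet_pullback_subset_sym2 : (pullback H Q f).edgeSet ⊆ H.verts.sym2 :=
  fun _ he => edgeSet_subset_sym2 H (SimpleGraph.Subgraph.edgeSet_mono pullback_le he)

theorem exists_mem_image_sdiff_of_mem_map {T : Set U} (hH : ∀ e ∈ H.edgeSet, ∃ x ∈ e, x ∉ T)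
    {s : Sym2 X} (hs : s ∈ Sym2.map f '' (pullback H Q f).edgeSet) :
    ∃ z ∈ s, z ∈ f '' (H.verts \ T) := by
  obtain ⟨e, he, rfl⟩ := hs
  have heH := SimpleGraph.Subgraph.edgeSet_mono pullback_le he
  obtain ⟨x, hx, hxT⟩ := hH e heH
  exact ⟨f x, Sym2.mem_map.mpr ⟨x, hx, rfl⟩, x, ⟨H.mem_verts_of_mem_edge heH hx, hxT⟩, rfl⟩

end Pullback

namespace IsProdCopyData

variable {G : Sub W} {R : Set W} {H : Sub U} {h₁ h₂ : U} {P Q : Sub X} {φ : W → X}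
  {ψ : Sym2 W → U → X} {N : Finset (Sym2 W)}

theorem image_subset (hP : IsProdCopyData G R H h₁ h₂ P φ ψ) {e : Sym2 W} (he : NRe G R e) :
    ψ e '' H.verts ⊆ ψ e '' (H.verts \ {h₁, h₂}) ∪ φ '' G.verts := by
  induction e using Sym2.inductionOn with | _ x y => ?_
  rintro _ ⟨h, hh, rfl⟩
  by_cases hroot : h ∈ ({h₁, h₂} : Set U)
  · have hxy : G.Adj x y := he.1
    have hmem : ψ s(x, y) h ∈ ({φ x, φ y} : Set X) := by
      rw [← hP.2.2.1 _ he x y rfl, ← Set.image_pair]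
      exact Set.mem_image_of_mem _ hroot
    exact .inr <| Set.pair_subset (Set.mem_image_of_mem φ (G.edge_vert hxy))
      (Set.mem_image_of_mem φ (G.edge_vert hxy.symm)) hmem
  · exact .inl ⟨h, ⟨hh, hroot⟩, rfl⟩

theorem verts_eq (hP : IsProdCopyData G R H h₁ h₂ P φ ψ) (hQ : Q ≤ P)
    (hN : ∀ e, e ∈ N ↔ NRe G R e) :
    Q.verts = φ '' (G.verts ∩ φ ⁻¹' Q.verts) ∪
      ⋃ e ∈ N, ψ e '' ((pullback H Q (ψ e)).verts \ {h₁, h₂}) := by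
  simp_rw [Set.image_inter_preimage, image_pullback_verts_sdiff]
  ext q
  constructor
  · intro hq
    have hqP := hQ.1 hq
    rw [hP.2.2.2.2.2.1] at hqP
    rcases hqP with hqφ | hqψ
    · exact .inl ⟨hqφ, hq⟩
    obtain ⟨e, he, hqe⟩ := Set.mem_iUnion₂.mp hqψ
    rcases hP.image_subset he hqe with hint | hφ
    · exact .inr <| Set.mem_iUnion₂.mpr ⟨e, (hN e).mpr he, hint, hq⟩
    · exact .inl ⟨hφ, hq⟩
  · rintro (⟨-, hq⟩ | hq)
    · exact hq
    · obtain ⟨e, -, -, hq⟩ := Set.mem_iUnion₂.mp hq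
      exact hq

theorem ncard_verts (hP : IsProdCopyData G R H h₁ h₂ P φ ψ) (hR : R ⊆ G.verts) (hQ : Q ≤ P)
    (hQfin : Q.verts.Finite) (hN : ∀ e, e ∈ N ↔ NRe G R e) :
    nverts Q = (Q.verts ∩ φ '' R).ncard + ((G.verts ∩ φ ⁻¹' Q.verts) \ R).ncard +
      ∑ e ∈ N, ((pullback H Q (ψ e)).verts \ {h₁, h₂}).ncard := by
  have hU := hP.verts_eq hQ hN
  obtain ⟨hφ, hψ, -, hdisj, hdisjφ, -, -⟩ := hP
  have hint : ∀ e, ψ e '' ((pullback H Q (ψ e)).verts \ {h₁, h₂}) ⊆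
      ψ e '' (H.verts \ {h₁, h₂}) := fun _ =>
    Set.image_mono (Set.sdiff_subset_sdiff_left pullback_le.1)
  have hfin := Set.finite_union.mp (hQfin.subset hU.symm.subset)
  have hφS : Set.InjOn φ (G.verts ∩ φ ⁻¹' Q.verts) := hφ.mono Set.inter_subset_left
  have hroots : φ '' ((G.verts ∩ φ ⁻¹' Q.verts) ∩ R) = Q.verts ∩ φ '' R := by
    rw [Set.inter_comm Q.verts, ← Set.image_inter_preimage]
    exact congrArg _ (Set.ext fun x => ⟨fun ⟨⟨_, hx⟩, hxR⟩ => ⟨hxR, hx⟩,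
      fun ⟨hxR, hx⟩ => ⟨⟨hR hxR, hx⟩, hxR⟩⟩)
  have hA : (φ '' (G.verts ∩ φ ⁻¹' Q.verts)).ncard =
      (Q.verts ∩ φ '' R).ncard + ((G.verts ∩ φ ⁻¹' Q.verts) \ R).ncard := by
    rw [hφS.ncard_image, ← hroots, (hφS.mono Set.inter_subset_left).ncard_image,
      Set.ncard_inter_add_ncard_sdiff_eq_ncard _ _ (hfin.1.of_finite_image hφS)]
  have hB : ∀ e ∈ N, (ψ e '' ((pullback H Q (ψ e)).verts \ {h₁, h₂})).ncard =
      ((pullback H Q (ψ e)).verts \ {h₁, h₂}).ncard := fun e he =>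
    ((hψ e ((hN e).mp he)).mono fun _ hx => pullback_le.1 hx.1).ncard_image
  calc nverts Q = _ := congrArg Set.ncard hU
    _ = _ := by
      rw [Set.ncard_union_eq ?_ hfin.1 hfin.2, Finset.set_ncard_biUnion ?_ ?_, hA,
        Finset.sum_congr rfl hB]
      · exact fun e he => hfin.2.subset (Set.subset_iUnion₂_of_subset e he subset_rfl)
      · exact fun e he e' he' hne =>
          (hdisj e e' ((hN e).mp he) ((hN e').mp he') hne).mono (hint e) (hint e')
      · exact Set.disjoint_iUnion₂_right.mpr fun e he =>
          ((hdisjφ e ((hN e).mp he)).mono (hint e) (Set.image_mono Set.inter_subset_left)).symm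

theorem edgeSet_eq (hP : IsProdCopyData G R H h₁ h₂ P φ ψ) (hQ : Q ≤ P)
    (hN : ∀ e, e ∈ N ↔ NRe G R e) :
    Q.edgeSet = {s ∈ Q.edgeSet | ∀ x ∈ s, x ∈ φ '' R} ∪
      ⋃ e ∈ N, Sym2.map (ψ e) '' (pullback H Q (ψ e)).edgeSet := by
  refine subset_antisymm (fun s hs => ?_) (Set.union_subset (Set.sep_subset _ _)
    (Set.iUnion₂_subset fun e _ => map_edgeSet_pullback_subset))
  induction s using Sym2.inductionOn with | _ u v => ?_
  rcases (hP.2.2.2.2.2.2 u v).mp (hQ.2 hs) with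
    ⟨p, q, -, hp, hq, rfl, rfl⟩ | ⟨e, he, p, q, hpq, rfl, rfl⟩
  · refine .inl ⟨hs, fun x hx => ?_⟩
    rcases Sym2.mem_iff.mp hx with rfl | rfl
    exacts [Set.mem_image_of_mem φ hp, Set.mem_image_of_mem φ hq]
  · exact .inr <| Set.mem_iUnion₂.mpr ⟨e, (hN e).mpr he, s(p, q), ⟨hpq, hs⟩, rfl⟩

theorem ncard_edgeSet (hP : IsProdCopyData G R H h₁ h₂ P φ ψ) (hR : R ⊆ G.verts)
    (hH : ∀ e ∈ H.edgeSet, ∃ x ∈ e, x ∉ ({h₁, h₂} : Set U)) (hQ : Q ≤ P)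
    (hQfin : Q.verts.Finite) (hN : ∀ e, e ∈ N ↔ NRe G R e) :
    nedges Q = rInEdges (φ '' R) Q + ∑ e ∈ N, nedges (pullback H Q (ψ e)) := by
  have hU := hP.edgeSet_eq hQ hN
  have hsub := @hP.image_subset
  obtain ⟨-, hψ, -, hdisj, hdisjφ, -, -⟩ := hP
  have hfin := Set.finite_union.mp ((edgeSet_finite hQfin).subset hU.symm.subset)
  have hcopy : ∀ e, ∀ s ∈ Sym2.map (ψ e) '' (pullback H Q (ψ e)).edgeSet, ∀ z ∈ s,
      z ∈ ψ e '' H.verts := by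
    rintro e _ ⟨s, hs, rfl⟩ z hz
    obtain ⟨x, hx, rfl⟩ := Sym2.mem_map.mp hz
    exact Set.mem_image_of_mem _
      (Set.mem_sym2_iff_subset.mp (edgeSet_pullback_subset_sym2 hs) hx)
  calc nedges Q = _ := congrArg Set.ncard hU
    _ = _ := by
      rw [Set.ncard_union_eq ?_ hfin.1 hfin.2, Finset.set_ncard_biUnion ?_ ?_]
      · refine congrArg _ (Finset.sum_congr rfl fun e he => ?_)
        exact ((hψ e ((hN e).mp he)).sym2_map.mono edgeSet_pullback_subset_sym2).ncard_image
      · exact fun e he => hfin.2.subset (Set.subset_iUnion₂_of_subset e he subset_rfl)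
      · refine fun e he e' he' hne => Set.disjoint_left.mpr fun s hs hs' => ?_
        obtain ⟨z, hzs, hz⟩ := exists_mem_image_sdiff_of_mem_map hH hs
        rcases hsub ((hN e').mp he') (hcopy e' s hs' z hzs) with h | h
        · exact Set.disjoint_left.mp (hdisj e e' ((hN e).mp he) ((hN e').mp he') hne) hz h
        · exact Set.disjoint_left.mp (hdisjφ e ((hN e).mp he)) hz h
      · refine Set.disjoint_iUnion₂_right.mpr fun e he =>
          Set.disjoint_left.mpr fun s hsR hs => ?_
        obtain ⟨z, hzs, hz⟩ := exists_mem_image_sdiff_of_mem_map hH hs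
        exact Set.disjoint_left.mp (hdisjφ e ((hN e).mp he)) hz
          (Set.image_mono hR (hsR.2 z hzs))

theorem forall_mem_of_roots_mem (hP : IsProdCopyData G R H h₁ h₂ P φ ψ) {e : Sym2 W}
    (he : NRe G R e) (h₁Q : h₁ ∈ (pullback H Q (ψ e)).verts)
    (h₂Q : h₂ ∈ (pullback H Q (ψ e)).verts) : ∀ x ∈ e, x ∈ G.verts ∩ φ ⁻¹' Q.verts := by
  induction e using Sym2.inductionOn with | _ x y => ?_
  have hxy : G.Adj x y := he.1
  have hφQ : {φ x, φ y} ⊆ Q.verts := hP.2.2.1 _ he x y rfl ▸ Set.pair_subset h₁Q.2 h₂Q.2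
  intro z hz
  rcases Sym2.mem_iff.mp hz with rfl | rfl
  exacts [⟨G.edge_vert hxy, hφQ (Set.mem_insert _ _)⟩,
    ⟨G.edge_vert hxy.symm, hφQ (Set.mem_insert_of_mem _ rfl)⟩]

end IsProdCopyData

theorem sum_le_of_excess_le {α : Type*} {N E : Finset α} (hE : E ⊆ N) {f g : α → ℝ}
    {t μ a : ℝ} (ht : 0 ≤ t) (ha : 0 ≤ a) (hout : ∀ e ∈ N, e ∉ E → f e ≤ t * g e)
    (hin : 0 < μ → ∀ e ∈ E, f e ≤ t * g e + t / μ) (hcard : (E.card : ℝ) ≤ μ * a) :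
    ∑ e ∈ N, f e ≤ t * (a + ∑ e ∈ N, g e) := by
  have hμ : E.Nonempty → 0 < μ := fun hEne => by
    have hE1 : (1 : ℝ) ≤ E.card := by exact_mod_cast hEne.card_pos
    by_contra! hμ
    linarith [mul_nonpos_of_nonpos_of_nonneg hμ ha]
  have hbound : ∀ e ∈ N, f e ≤ t * g e + if e ∈ E then t / μ else 0 := by
    intro e he
    split_ifs with heE
    · exact hin (hμ ⟨e, heE⟩) e heE
    · rw [add_zero]
      exact hout e he heE
  have hexcess : E.card * (t / μ) ≤ t * a := by
    rcases E.eq_empty_or_nonempty with hE0 | hEne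
    · rw [hE0, Finset.card_empty, Nat.cast_zero, zero_mul]
      positivity
    · have := hμ hEne
      calc E.card * (t / μ) ≤ μ * a * (t / μ) := by gcongr
        _ = t * a := by field_simp
  calc ∑ e ∈ N, f e ≤ ∑ e ∈ N, (t * g e + if e ∈ E then t / μ else 0) :=
        Finset.sum_le_sum hbound
    _ = t * ∑ e ∈ N, g e + E.card * (t / μ) := by
      rw [Finset.sum_add_distrib, ← Finset.mul_sum, Finset.sum_ite_mem,
        Finset.inter_eq_right.mpr hE, Finset.sum_const, nsmul_eq_mul]
    _ ≤ t * (a + ∑ e ∈ N, g e) := by linarith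

theorem stmt14 (G : Sub ℕ) (R : Set ℕ) (hGfin : G.verts.Finite) (hR : R ⊆ G.verts)
    (H : Sub ℕ) (hHfin : H.verts.Finite) (h₁ h₂ : ℕ) (hadj : H.Adj h₁ h₂)
    (hbal : BalancedRooted {h₁, h₂} H)
    (t : ℝ) (ht : 0 < t)
    (hm1 : m1D (H.deleteEdges {s(h₁, h₂)}) ≤ t)
    (hineq : -(1 / mRooted R G) ≤ ((nverts H : ℝ) - 2) - ((nedges H : ℝ) - 1) / t)
    (P : Sub ℕ) (hPfin : P.verts.Finite) (φ : ℕ → ℕ)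
    (hP : IsProdCopy G R (H.deleteEdges {s(h₁, h₂)}) h₁ h₂ P φ) :
    mRooted (φ '' R) P ≤ t := by
  obtain ⟨ψ, hP⟩ := hP
  obtain ⟨N, hN⟩ : ∃ N : Finset (Sym2 ℕ), ∀ e, e ∈ N ↔ NRe G R e :=
    ⟨((edgeSet_finite hGfin).subset fun _ he => he.1).toFinset,
      fun _ => Set.Finite.mem_toFinset _⟩
  refine mRooted_le fun Q hQ => ?_
  have hQfin : Q.verts.Finite := hPfin.subset hQ.1
  have hH : ∀ e ∈ (H.deleteEdges {s(h₁, h₂)}).edgeSet, ∃ x ∈ e, x ∉ ({h₁, h₂} : Set ℕ) :=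
    fun _ => exists_notMem_pair_of_le_deleteEdges le_rfl
  rw [rdd, hP.ncard_verts hR hQ hQfin hN, hP.ncard_edgeSet hR hH hQ hQfin hN]
  push_cast
  rw [add_sub_cancel_left, add_assoc, add_sub_cancel_left]
  refine div_le_of_le_mul₀ (by positivity) ht.le ?_
  refine sum_le_of_excess_le (Finset.filter_subset
    (fun e => ∀ x ∈ e, x ∈ G.verts ∩ φ ⁻¹' Q.verts) N) ht.le (by positivity) ?_ ?_
    (card_nonroot_edges_le hGfin Set.inter_subset_left hN)
  · intro e he heS
    refine nedges_le_of_m1D_le (H := H.deleteEdges {s(h₁, h₂)}) hHfin pullback_le ht.le hm1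
      fun ⟨h₁Q, h₂Q⟩ => heS ?_
    exact Finset.mem_filter.mpr ⟨he, hP.forall_mem_of_roots_mem ((hN e).mp he) h₁Q h₂Q⟩
  · exact fun hμ e _ => nedges_le_of_balancedRooted hHfin hadj hbal pullback_le ht hμ hineq

end OG
end
end

section
/- Let r ≥ 2 and suppose G is a 2-balanced graph with density d(G) = e_G/v_G at least 1. Then max over all proper subsets R ⊊ V(G) of m(R,G) is at most v_G − 1, and moreover v_G − 1 < (1/m(G) − 1/m̄ʳ₂(G))^{−1} (in particular 1/m(G) − 1/m̄ʳ₂(G) > 0). -/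
open Filter Asymptotics
open scoped Classical ENNReal

noncomputable section

namespace OG

variable {W U X : Type*}

variable {ι : Type*} [Fintype ι]

/-!
Every non-root edge of a rooted graph meets a non-root vertex, which has fewer than `v_G`
neighbours; this bounds `m(R,G)`.

For the densities, `d(G) ≥ 1` forces `e_G ≥ v_G ≥ 3`, and then 2-balancedness,
`(e_H - 1)(v_G - 2) ≤ (e_G - 1)(v_H - 2)`, shows that `G` itself maximises `e_H / (v_H - 2 + t)`
over `H ⊆ G` as soon as `t ≥ t* := (v_G - 2)/(e_G - 1)`. Taking `t = 2` gives `m(G) = d(G)`, and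
by induction `1 / m̄ᵏ⁺¹₂(G)` is the `k`-th iterate of `y ↦ (v_G - 2 + y)/e_G` started at
`v_G / e_G`, which converges geometrically to its fixed point `t*`. Hence
`1/m(G) - 1/m̄ʳ₂(G) = (v_G/e_G - t*)(1 - e_G^{1-r})` lies strictly between `0` and
`v_G/e_G - t* = (2e_G - v_G)/(e_G(e_G - 1)) ≤ 1/(v_G - 1)`.
-/

instance (G : Sub W) : Nonempty {H : Sub W // H ≤ G} := ⟨⟨G, le_rfl⟩⟩

lemma edgeSet_subset_image_offDiag {H : Sub W} (hH : H.verts.Finite) :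
    H.edgeSet ⊆ ↑(hH.toFinset.offDiag.image Sym2.mk.uncurry) := by
  intro e he
  induction e using Sym2.ind with
  | _ x y =>
    have hadj : H.Adj x y := he
    simp only [Finset.coe_image, Set.mem_image, Finset.mem_coe, Finset.mem_offDiag,
      Set.Finite.mem_toFinset]
    exact ⟨(x, y), ⟨H.edge_vert hadj, H.edge_vert hadj.symm, H.adj_sub hadj⟩, rfl⟩

lemma edgeSet_finite_s15 {H : Sub W} (hH : H.verts.Finite) : H.edgeSet.Finite :=
  (Finset.finite_toSet _).subset (edgeSet_subset_image_offDiag hH)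

lemma nedges_le_choose_two {H : Sub W} (hH : H.verts.Finite) :
    nedges H ≤ (nverts H).choose 2 := by
  calc nedges H ≤ (↑(hH.toFinset.offDiag.image Sym2.mk.uncurry) : Set (Sym2 W)).ncard :=
        Set.ncard_le_ncard (edgeSet_subset_image_offDiag hH) (Finset.finite_toSet _)
    _ = (nverts H).choose 2 := by
        rw [Set.ncard_coe_finset, Sym2.card_image_offDiag, nverts, Set.ncard_eq_toFinset_card _ hH]

lemma two_le_nverts_of_one_le_nedges {H : Sub W} (hH : H.verts.Finite) (he : 1 ≤ nedges H) :
    2 ≤ nverts H := by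
  by_contra! h
  have := nedges_le_choose_two hH
  rw [Nat.choose_eq_zero_of_lt h] at this
  omega

lemma nverts_mono {G H : Sub W} (hG : G.verts.Finite) (h : H ≤ G) : nverts H ≤ nverts G :=
  Set.ncard_le_ncard h.1 hG

lemma nedges_mono {G H : Sub W} (hG : G.verts.Finite) (h : H ≤ G) : nedges H ≤ nedges G :=
  Set.ncard_le_ncard (SimpleGraph.Subgraph.edgeSet_mono h) (edgeSet_finite_s15 hG)

lemma bddAbove_range_nverts_nedges {G : Sub W} (hG : G.verts.Finite) {p : Sub W → Prop}
    (hp : ∀ H, p H → H ≤ G) (f : ℕ → ℕ → ℝ) :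
    BddAbove (Set.range fun H : {H : Sub W // p H} => f (nverts H.1) (nedges H.1)) := by
  refine (((Set.finite_Iic (nverts G)).prod (Set.finite_Iic (nedges G))).image
    fun n => f n.1 n.2).bddAbove.mono ?_
  rintro _ ⟨⟨H, hH⟩, rfl⟩
  exact ⟨(nverts H, nedges H), ⟨nverts_mono hG (hp H hH), nedges_mono hG (hp H hH)⟩, rfl⟩

lemma nverts_pos_of_one_le_dd {G : Sub W} (hd : 1 ≤ dd G) : 0 < nverts G := by
  by_contra! h
  simp only [dd, Nat.le_zero.1 h, Nat.cast_zero, div_zero] at hd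
  linarith

lemma nverts_le_nedges_of_one_le_dd {G : Sub W} (hd : 1 ≤ dd G) : nverts G ≤ nedges G := by
  exact_mod_cast (one_le_div (by exact_mod_cast nverts_pos_of_one_le_dd hd)).1 hd

lemma three_le_nverts_of_one_le_dd {G : Sub W} (hG : G.verts.Finite) (hd : 1 ≤ dd G) :
    3 ≤ nverts G := by
  have hpos := nverts_pos_of_one_le_dd hd
  have hev := nverts_le_nedges_of_one_le_dd hd
  have := nedges_le_choose_two hG
  by_contra! h
  interval_cases nverts G <;> simp only [Nat.choose_succ_self, Nat.choose_self] at this <;> omega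

lemma ncard_edges_meeting_le {H : Sub W} (hH : H.verts.Finite) (S : Set W) :
    {e ∈ H.edgeSet | ∃ x ∈ e, x ∈ S}.ncard ≤ (H.verts ∩ S).ncard * (nverts H - 1) := by
  set V := hH.toFinset
  set A := V.filter (· ∈ S)
  have hA : (H.verts ∩ S).ncard = A.card := by
    rw [← Set.ncard_coe_finset]
    congr 1
    ext
    simp [A, V]
  have hsub : {e ∈ H.edgeSet | ∃ x ∈ e, x ∈ S} ⊆
      ↑(A.biUnion fun x => (V.erase x).image fun y => s(x, y)) := by
    rintro e ⟨he, x, hx, hxS⟩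
    rw [← Sym2.other_spec hx] at he ⊢
    have hadj : H.Adj x (Sym2.Mem.other hx) := he
    simp only [Finset.coe_biUnion, Finset.coe_image, Set.mem_iUnion, Set.mem_image,
      Finset.mem_coe, Finset.mem_erase, exists_prop]
    exact ⟨x, by simp [A, V, H.edge_vert hadj, hxS], _,
      ⟨(H.adj_sub hadj).symm, (Set.Finite.mem_toFinset hH).2 (H.edge_vert hadj.symm)⟩, rfl⟩
  calc _ ≤ (A.biUnion fun x => (V.erase x).image fun y => s(x, y)).card := by
        rw [← Set.ncard_coe_finset]
        exact Set.ncard_le_ncard hsub (Finset.finite_toSet _)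
    _ ≤ A.card * (V.card - 1) := Finset.card_biUnion_le_card_mul _ _ _ fun x hx =>
        Finset.card_image_le.trans (Finset.card_erase_of_mem (Finset.mem_filter.1 hx).1).le
    _ = _ := by rw [hA, nverts, Set.ncard_eq_toFinset_card _ hH]

lemma rdd_le_nverts_sub_one {G H : Sub W} (hG : G.verts.Finite) (hv : 1 ≤ nverts G) (R : Set W)
    (hH : H ≤ G) : rdd R H ≤ (nverts G : ℝ) - 1 := by
  have hHfin := hG.subset hH.1
  have hnum : (nedges H : ℝ) - rInEdges R H = ({e ∈ H.edgeSet | ∃ x ∈ e, x ∈ Rᶜ}.ncard : ℝ) := by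
    rw [nedges, rInEdges, ← Set.cast_ncard_sdiff (Set.sep_subset _ _) (edgeSet_finite_s15 hHfin)]
    congr 2
    ext e
    simp
  have hden : (nverts H : ℝ) - (H.verts ∩ R).ncard = (H.verts ∩ Rᶜ).ncard := by
    rw [nverts, ← Set.cast_ncard_sdiff Set.inter_subset_left hHfin, Set.sdiff_self_inter,
      Set.sdiff_eq]
  have hdeg : ((nverts H - 1 : ℕ) : ℝ) ≤ (nverts G : ℝ) - 1 := by
    calc ((nverts H - 1 : ℕ) : ℝ) ≤ ((nverts G - 1 : ℕ) : ℝ) :=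
          Nat.cast_le.2 (Nat.sub_le_sub_right (nverts_mono hG hH) 1)
      _ = _ := by rw [Nat.cast_sub hv, Nat.cast_one]
  rw [rdd, hnum, hden]
  rcases Nat.eq_zero_or_pos (H.verts ∩ Rᶜ).ncard with h0 | hpos
  · rw [h0, Nat.cast_zero, div_zero, sub_nonneg]
    exact_mod_cast hv
  · rw [div_le_iff₀ (by exact_mod_cast hpos)]
    calc _ ≤ (((H.verts ∩ Rᶜ).ncard * (nverts H - 1) : ℕ) : ℝ) :=
          by exact_mod_cast ncard_edges_meeting_le hHfin Rᶜ
      _ ≤ _ := by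
          push_cast
          rw [mul_comm]
          exact mul_le_mul_of_nonneg_right hdeg (Nat.cast_nonneg _)

namespace TwoBalanced

variable {G : Sub W} (hbal : TwoBalanced G) (hG : G.verts.Finite) (hv : 3 ≤ nverts G)
include hbal hG hv

lemma sub_one_mul_le {H : Sub W} (hH : H ≤ G) (he : 1 ≤ nedges H) :
    ((nedges H : ℝ) - 1) * ((nverts G : ℝ) - 2) ≤ ((nedges G : ℝ) - 1) * ((nverts H : ℝ) - 2) := by
  have hHfin := hG.subset hH.1
  rcases (two_le_nverts_of_one_le_nedges hHfin he).eq_or_lt with h2 | h3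
  · have : nedges H = 1 := le_antisymm (by simpa [← h2] using nedges_le_choose_two hHfin) he
    simp [this, ← h2]
  · have hd2 : d2 H ≤ d2 G := hbal ▸ le_ciSup (bddAbove_range_nverts_nedges hG
      (fun _ h => h.1) fun v e => ((e : ℝ) - 1) / ((v : ℝ) - 2)) ⟨H, hH, he⟩
    have hvH : (3 : ℝ) ≤ nverts H := by exact_mod_cast h3
    have hvG : (3 : ℝ) ≤ nverts G := by exact_mod_cast hv
    rwa [d2, d2, div_le_div_iff₀ (by linarith) (by linarith)] at hd2

lemma div_le_div {H : Sub W} (hH : H ≤ G) {t : ℝ} (ht : 0 < t)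
    (hfix : (nverts G : ℝ) - 2 ≤ t * ((nedges G : ℝ) - 1)) :
    (nedges H : ℝ) / ((nverts H : ℝ) - 2 + t) ≤ (nedges G : ℝ) / ((nverts G : ℝ) - 2 + t) := by
  have hvG : (3 : ℝ) ≤ nverts G := by exact_mod_cast hv
  rcases Nat.eq_zero_or_pos (nedges H) with h0 | he
  · rw [h0, Nat.cast_zero, zero_div]
    exact div_nonneg (Nat.cast_nonneg _) (by linarith)
  · have key := hbal.sub_one_mul_le hG hv hH he
    have hvH : (2 : ℝ) ≤ nverts H := by
      exact_mod_cast two_le_nverts_of_one_le_nedges (hG.subset hH.1) he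
    have heH : (nedges H : ℝ) ≤ nedges G := by exact_mod_cast nedges_mono hG hH
    rw [div_le_div_iff₀ (by linarith) (by linarith)]
    nlinarith [mul_le_mul_of_nonneg_right hfix (sub_nonneg.2 heH)]

lemma iSup_div_eq {t : ℝ} (ht : 0 < t) (hfix : (nverts G : ℝ) - 2 ≤ t * ((nedges G : ℝ) - 1)) :
    ⨆ H : {H : Sub W // H ≤ G}, (nedges H.1 : ℝ) / ((nverts H.1 : ℝ) - 2 + t) =
      (nedges G : ℝ) / ((nverts G : ℝ) - 2 + t) :=
  le_antisymm (ciSup_le fun H => hbal.div_le_div hG hv H.2 ht hfix)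
    (le_ciSup (bddAbove_range_nverts_nedges hG (fun _ h => h)
      fun v e => (e : ℝ) / ((v : ℝ) - 2 + t)) ⟨G, le_rfl⟩)

variable (hev : nverts G ≤ nedges G)
include hev

lemma mD_eq : mD G = dd G := by
  have hvG : (3 : ℝ) ≤ nverts G := by exact_mod_cast hv
  have heG : (nverts G : ℝ) ≤ nedges G := by exact_mod_cast hev
  simpa only [mD, dd, sub_add_cancel] using hbal.iSup_div_eq hG hv two_pos (by linarith)

lemma one_div_mbar_succ (k : ℕ) :
    1 / mbar G (k + 1) = ((nverts G : ℝ) - 2) / ((nedges G : ℝ) - 1) +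
      ((nverts G : ℝ) / nedges G - ((nverts G : ℝ) - 2) / ((nedges G : ℝ) - 1)) /
        (nedges G : ℝ) ^ k := by
  have hvG : (3 : ℝ) ≤ nverts G := by exact_mod_cast hv
  have heG : (nverts G : ℝ) ≤ nedges G := by exact_mod_cast hev
  set v : ℝ := (nverts G : ℝ)
  set e : ℝ := (nedges G : ℝ)
  have hfix_pos : 0 < (v - 2) / (e - 1) := div_pos (by linarith) (by linarith)
  have hstart : (v - 2) / (e - 1) ≤ v / e := by
    rw [div_le_div_iff₀ (by linarith) (by linarith)]
    nlinarith
  induction k with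
  | zero => rw [mbar, hbal.mD_eq hG hv hev, dd, pow_zero, div_one, one_div_div]; ring
  | succ k ih =>
    set y := 1 / mbar G (k + 1)
    have hy : (v - 2) / (e - 1) ≤ y := by
      rw [ih]
      exact le_add_of_nonneg_right (div_nonneg (by linarith) (by positivity))
    have hmbar : mbar G (k + 1 + 1) = e / (v - 2 + y) := by
      rw [mbar]
      refine hbal.iSup_div_eq hG hv (hfix_pos.trans_le hy) ?_
      rwa [div_le_iff₀ (by linarith)] at hy
    have he0 : e ≠ 0 := (by linarith : (0:ℝ) < e).ne'
    have he1 : e - 1 ≠ 0 := by linarith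
    rw [hmbar, one_div_div, ih, pow_succ]
    field_simp
    ring

end TwoBalanced

lemma gap_pos_and_sub_one_lt_inv {v e : ℝ} (hv : 3 ≤ v) (hve : v ≤ e) {k : ℕ} (hk : k ≠ 0) :
    0 < v / e - ((v - 2) / (e - 1) + (v / e - (v - 2) / (e - 1)) / e ^ k) ∧
      v - 1 < (v / e - ((v - 2) / (e - 1) + (v / e - (v - 2) / (e - 1)) / e ^ k))⁻¹ := by
  have he0 : e ≠ 0 := (by linarith : (0 : ℝ) < e).ne'
  have he1 : e - 1 ≠ 0 := by linarith
  have hgap : v / e - ((v - 2) / (e - 1) + (v / e - (v - 2) / (e - 1)) / e ^ k) =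
      (2 * e - v) / (e * (e - 1)) * (1 - (e ^ k)⁻¹) := by
    field_simp
    ring
  have hδ : 0 < (2 * e - v) / (e * (e - 1)) := div_pos (by linarith) (by nlinarith)
  have hδle : (v - 1) * ((2 * e - v) / (e * (e - 1))) ≤ 1 := by
    rw [mul_div_assoc', div_le_one (by nlinarith)]
    nlinarith
  have hq : 0 < 1 - (e ^ k)⁻¹ ∧ 1 - (e ^ k)⁻¹ < 1 := by
    have := one_lt_pow₀ (by linarith : 1 < e) hk
    constructor
    · linarith [inv_lt_one_of_one_lt₀ this]
    · linarith [inv_pos.2 (by linarith : (0 : ℝ) < e ^ k)]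
  have hg := mul_pos hδ hq.1
  rw [hgap]
  refine ⟨hg, ?_⟩
  rw [← one_div, lt_div_iff₀ hg, ← mul_assoc]
  nlinarith

theorem stmt15 {W : Type} (G : Sub W) (hGfin : G.verts.Finite)
    (r : ℕ) (hr : 2 ≤ r) (hbal : TwoBalanced G) (hd : 1 ≤ dd G) :
    (∀ R : Set W, R ⊆ G.verts → R ≠ G.verts → mRooted R G ≤ (nverts G : ℝ) - 1) ∧
    0 < 1 / mD G - 1 / mbar G r ∧
    (nverts G : ℝ) - 1 < (1 / mD G - 1 / mbar G r)⁻¹ := by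
  have hv := three_le_nverts_of_one_le_dd hGfin hd
  have hev := nverts_le_nedges_of_one_le_dd hd
  refine ⟨fun R _ _ => ciSup_le fun H => rdd_le_nverts_sub_one hGfin (by omega) R H.2, ?_⟩
  obtain ⟨k, rfl⟩ : ∃ k, r = k + 1 := ⟨r - 1, by omega⟩
  rw [hbal.mD_eq hGfin hv hev, dd, one_div_div, hbal.one_div_mbar_succ hGfin hv hev]
  exact gap_pos_and_sub_one_lt_inv (by exact_mod_cast hv) (by exact_mod_cast hev) (by omega)

end OG
end
end

section
/- Let (R,F) be a rooted graph with e_{F₋} > 1, and let 0 < γ ≤ 1, 0 < q = q(n) ≤ 1, and A ≥ 1. Then for n sufficiently large, every hypergraph G_R ∈ R(R,n) which is (F,Aq)-upper-extensible satisfies δ(E(G_R,F), γ⁻¹ n^{−1/m₂(R,F,−log_n q)}) ≤ γ · e_{F₋} · 2^{e_{F₋}²} · n^{|R|}(Aq)^{e_{F[R]}} / |E(G_R)|. -/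
open Filter Asymptotics
open scoped Classical ENNReal

noncomputable section

namespace OG

variable {W U X : Type*}

variable {ι : Type*} [Fintype ι]

/-!
A vertex of `𝓔(G_R,F)` is an edge of `K_{F₋,n}`; an edge is a pair `(e, f)` of a root edge
`e ∈ G_R` and an extension `f` of `e` to all classes. Hence the total degree is exactly
`e_{F₋} |G_R| n^{v_F - |R|}`, and at most `e_{F₋} n²` vertices have positive degree.

Let `σ` be a set of `j ≥ 2` edges of a copy `f`, and `T` the set of classes met by `σ`. Every copy
containing `σ` agrees with `f` on `T`, so upper-extensibility bounds the degree of `σ` by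
`(Aq)^{e_{F[R]} - e_{F[R ∩ T]}} n^{v_F - |T|}`. The induced graph `F[T]` has at least `j` non-root
edges, so with `t = -log_n q` the definition of `m₂ = m₂(R,F,t)` gives
`(j - 1)/m₂ ≤ |T| - 2 - t e_{F[R ∩ T]}`; as `q = n^{-t}` this turns the bound into
`n^{-(j-1)/m₂} n^{v_F - 2} (Aq)^{e_{F[R]}}`. Summing over the vertices of positive degree gives
`δ_j ≤ γ^{j-1} n^{|R|} (Aq)^{e_{F[R]}} / |G_R|`. When `m₂ = ∞` the exponent vanishes, and the
trivial bound `d^{(j)}(v) ≤ d(v)` together with `|G_R| ≤ n^{|R|} (Aq)^{e_{F[R]}}` gives the same.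
-/

open Finset

section

lemma natCast_iSup_le {κ : Type*} [Finite κ] {f : κ → ℕ} {b : ℝ} (hb : 0 ≤ b)
    (h : ∀ i, (f i : ℝ) ≤ b) : ((⨆ i, f i : ℕ) : ℝ) ≤ b := by
  rcases isEmpty_or_nonempty κ with hκ | hκ
  · simpa using hb
  · obtain ⟨i, hi⟩ := exists_eq_ciSup_of_finite (f := f)
    exact hi ▸ h i

variable {V : Type*} {n : ℕ}

lemma ncard_copyEdges (G : SimpleGraph V) (f : V → Fin n) : (copyEdges G f).ncard = eCnt G :=
  Set.ncard_image_of_injective _ (Sym2.map.injective fun _ _ h => congrArg Prod.fst h)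

lemma snd_eq_of_mem_copyEdges {G : SimpleGraph V} {f : V → Fin n} {v : Sym2 (V × Fin n)}
    (hv : v ∈ copyEdges G f) {p : V × Fin n} (hp : p ∈ v) : p.2 = f p.1 := by
  obtain ⟨w, -, rfl⟩ := hv
  obtain ⟨i, -, rfl⟩ := Sym2.mem_map.mp hp
  rfl

lemma map_fst_map_graph (f : V → Fin n) (w : Sym2 V) :
    Sym2.map Prod.fst (Sym2.map (fun i => (i, f i)) w) = w := by
  rw [Sym2.map_map]
  exact congrFun Sym2.map_id' w

lemma map_fst_mem_edgeSet_of_mem_copyEdges {G : SimpleGraph V} {f : V → Fin n}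
    {v : Sym2 (V × Fin n)} (hv : v ∈ copyEdges G f) : Sym2.map Prod.fst v ∈ G.edgeSet := by
  obtain ⟨w, hw, rfl⟩ := hv
  rwa [map_fst_map_graph]

lemma injOn_map_fst_copyEdges (G : SimpleGraph V) (f : V → Fin n) :
    Set.InjOn (Sym2.map Prod.fst) (copyEdges G f) := by
  rintro _ ⟨w, -, rfl⟩ _ ⟨w', -, rfl⟩ h
  rw [map_fst_map_graph, map_fst_map_graph] at h
  rw [h]

def extensions (R : Finset ι) (GR : Finset (R → Fin n)) : Finset ((R → Fin n) × (ι → Fin n)) :=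
  univ.filter fun pf => pf.1 ∈ GR ∧ ∀ i : R, pf.2 i = pf.1 i

lemma card_extensions (R : Finset ι) (GR : Finset (R → Fin n)) :
    #(extensions R GR) = #GR * n ^ (Fintype.card ι - #R) := by
  have hprod : #(GR ×ˢ (univ : Finset ({i // i ∉ R} → Fin n))) =
      #GR * n ^ (Fintype.card ι - #R) := by
    rw [card_product, card_univ, Fintype.card_fun, Fintype.card_fin,
      Fintype.card_subtype_compl, Fintype.card_coe]
  rw [← hprod]
  refine card_nbij' (fun pf => (pf.1, fun i => pf.2 i))
    (fun eg => (eg.1, fun i => if h : i ∈ R then eg.1 ⟨i, h⟩ else eg.2 ⟨i, h⟩)) ?_ ?_ ?_ ?_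
  · intro pf hpf
    simp only [extensions, coe_filter, mem_univ, true_and, Set.mem_ofPred_eq] at hpf
    simp [hpf.1]
  · intro eg heg
    simp only [coe_product, Set.mem_prod, mem_coe] at heg
    simp only [extensions, coe_filter, mem_univ, true_and]
    exact ⟨heg.1, fun i => dif_pos i.2⟩
  · intro pf hpf
    simp only [extensions, coe_filter, mem_univ, true_and, Set.mem_ofPred_eq] at hpf
    ext i
    · rfl
    · by_cases hi : i ∈ R
      · simp [hi, hpf.2 ⟨i, hi⟩]
      · simp [hi]
  · intro eg _
    ext i <;> simp [i.2]

lemma degI_eq_card_filter (F : SimpleGraph ι) (R : Finset ι) (GR : Finset (R → Fin n))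
    (σ : Finset (Sym2 (ι × Fin n))) :
    degI F R GR σ = #((extensions R GR).filter fun pf => ↑σ ⊆ copyEdges (Fm F R) pf.2) := by
  rw [degI, ← Set.ncard_coe_finset]
  congr 1
  ext pf
  simp [extensions, and_assoc]

lemma degI_anti (F : SimpleGraph ι) (R : Finset ι) (GR : Finset (R → Fin n))
    {σ σ' : Finset (Sym2 (ι × Fin n))} (h : σ ⊆ σ') : degI F R GR σ' ≤ degI F R GR σ := by
  simp only [degI_eq_card_filter]
  exact card_le_card (monotone_filter_right _ fun _ _ hpf => (coe_subset.mpr h).trans hpf)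

lemma djI_le_degI_singleton (F : SimpleGraph ι) (R : Finset ι) (GR : Finset (R → Fin n))
    (j : ℕ) (v : Sym2 (ι × Fin n)) : djI F R GR j v ≤ degI F R GR {v} :=
  ciSup_le' fun σ => degI_anti F R GR (singleton_subset_iff.mpr σ.2.1)

lemma sum_degI_singleton (F : SimpleGraph ι) (R : Finset ι) (GR : Finset (R → Fin n)) :
    ∑ v, degI F R GR {v} = eCnt (Fm F R) * (#GR * n ^ (Fintype.card ι - #R)) := by
  have hdeg : ∀ v, degI F R GR {v} =
      #((extensions R GR).bipartiteBelow (fun pf v => v ∈ copyEdges (Fm F R) pf.2) v) := by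
    intro v
    simp [degI_eq_card_filter, bipartiteBelow]
  have hcopy : ∀ pf : (R → Fin n) × (ι → Fin n),
      #(univ.bipartiteAbove (fun pf v => v ∈ copyEdges (Fm F R) pf.2) pf) = eCnt (Fm F R) := by
    intro pf
    rw [bipartiteAbove, Set.filter_mem_univ_eq_toFinset, ← Set.ncard_eq_toFinset_card',
      ncard_copyEdges]
  simp only [hdeg, ← sum_card_bipartiteAbove_eq_sum_card_bipartiteBelow, hcopy, sum_const,
    smul_eq_mul, card_extensions, mul_comm]

lemma card_filter_degI_ne_zero_le (F : SimpleGraph ι) (R : Finset ι) (GR : Finset (R → Fin n)) :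
    #(univ.filter fun v : Sym2 (ι × Fin n) => degI F R GR {v} ≠ 0) ≤ eCnt (Fm F R) * n ^ 2 := by
  let lift : Sym2 ι × Fin n × Fin n → Sym2 (ι × Fin n) :=
    fun x => s((x.1.out.1, x.2.1), (x.1.out.2, x.2.2))
  calc _ ≤ #(((Fm F R).edgeSet.toFinset ×ˢ univ).image lift) := card_le_card ?_
    _ ≤ #((Fm F R).edgeSet.toFinset ×ˢ (univ : Finset (Fin n × Fin n))) := card_image_le
    _ = eCnt (Fm F R) * n ^ 2 := by
      rw [card_product, ← Set.ncard_eq_toFinset_card', card_univ, Fintype.card_prod,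
        Fintype.card_fin, sq, eCnt]
  intro v hv
  obtain ⟨pf, -, -, hpf⟩ := Set.nonempty_of_ncard_ne_zero (mem_filter.mp hv).2
  obtain ⟨w, hw, rfl⟩ : v ∈ copyEdges (Fm F R) pf.2 := hpf (by simp)
  refine mem_image.mpr ⟨(w, pf.2 w.out.1, pf.2 w.out.2), by simpa using hw, ?_⟩
  conv_rhs => rw [← Quot.out_eq w]
  rfl

def classesOf (σ : Finset (Sym2 (ι × Fin n))) : Finset ι :=
  univ.filter fun i => ∃ v ∈ σ, i ∈ Sym2.map Prod.fst v

lemma eqOn_classesOf {G : SimpleGraph ι} {σ : Finset (Sym2 (ι × Fin n))} {f f' : ι → Fin n}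
    (hf : ↑σ ⊆ copyEdges G f) (hf' : ↑σ ⊆ copyEdges G f') :
    ∀ i ∈ classesOf σ, f i = f' i := by
  intro i hi
  obtain ⟨v, hv, hiv⟩ := (mem_filter.mp hi).2
  obtain ⟨p, hp, rfl⟩ := Sym2.mem_map.mp hiv
  rw [← snd_eq_of_mem_copyEdges (hf hv) hp, ← snd_eq_of_mem_copyEdges (hf' hv) hp]

lemma card_filter_extensions_eqOn_le (R T : Finset ι) (GR : Finset (R → Fin n))
    (g : ι → Fin n) :
    #((extensions R GR).filter fun pf => ∀ i ∈ T, pf.2 i = g i) ≤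
      #(GR.filter fun e => ∀ i : R, (i : ι) ∈ R ∩ T → e i = g i) *
        n ^ (Fintype.card ι - #(R ∪ T)) := by
  have hprod : #((GR.filter fun e => ∀ i : R, (i : ι) ∈ R ∩ T → e i = g i) ×ˢ
      (univ : Finset ({i // i ∉ R ∪ T} → Fin n))) =
        #(GR.filter fun e => ∀ i : R, (i : ι) ∈ R ∩ T → e i = g i) *
          n ^ (Fintype.card ι - #(R ∪ T)) := by
    rw [card_product, card_univ, Fintype.card_fun, Fintype.card_fin,
      Fintype.card_subtype_compl, Fintype.card_coe]
  rw [← hprod]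
  refine card_le_card_of_injOn (fun pf => (pf.1, fun i : {i // i ∉ R ∪ T} => pf.2 i)) ?_ ?_
  · intro pf hpf
    simp only [extensions, coe_filter, mem_filter, mem_univ, true_and, Set.mem_ofPred_eq] at hpf
    simp only [coe_product, Set.mem_prod, coe_filter, Set.mem_ofPred_eq, coe_univ,
      Set.mem_univ, and_true]
    exact ⟨hpf.1.1, fun i hi => hpf.1.2 i ▸ hpf.2 i (mem_inter.mp hi).2⟩
  · intro pf hpf pf' hpf' h
    simp only [extensions, coe_filter, mem_filter, mem_univ, true_and, Set.mem_ofPred_eq]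
      at hpf hpf'
    simp only [Prod.mk.injEq] at h
    refine Prod.ext h.1 (funext fun i => ?_)
    by_cases hR : i ∈ R
    · rw [hpf.1.2 ⟨i, hR⟩, hpf'.1.2 ⟨i, hR⟩, h.1]
    by_cases hT : i ∈ T
    · rw [hpf.2 i hT, hpf'.2 i hT]
    exact congrFun h.2 ⟨i, by simp [hR, hT]⟩

lemma eIn_mono (G : SimpleGraph ι) {S S' : Finset ι} (h : S ⊆ S') : eIn G S ≤ eIn G S' :=
  Set.ncard_le_ncard (fun _ he => ⟨he.1, fun x hx => h (he.2 x hx)⟩) (Set.toFinite _)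

lemma eIn_empty (G : SimpleGraph V) : eIn G ∅ = 0 := by
  rw [eIn, ← Set.ncard_empty (Sym2 V)]
  congr
  exact Set.eq_empty_of_forall_notMem fun e he => by simpa using he.2 _ (Sym2.out_fst_mem e)

lemma card_le_of_upperExt {F : SimpleGraph V} {R : Finset V} {GR : Finset (R → Fin n)} {p : ℝ}
    (hn : 0 < n) (hGR : UpperExt F R n GR p) : (#GR : ℝ) ≤ p ^ eIn F R * n ^ #R := by
  simpa [eIn_empty] using hGR ∅ (empty_subset R) fun _ => ⟨0, hn⟩

lemma rInEdges_add_card_le_nedges [Finite V] {R : Set V} {H : Sub V} {s : Finset (Sym2 V)}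
    (hs : ∀ e ∈ s, e ∈ H.edgeSet ∧ ¬ ∀ x ∈ e, x ∈ R) : rInEdges R H + #s ≤ nedges H := by
  rw [rInEdges, nedges, ← Set.ncard_coe_finset, ← Set.ncard_union_eq]
  · exact Set.ncard_le_ncard (Set.union_subset (fun e he => he.1) fun e he => (hs e he).1)
  · exact Set.disjoint_left.mpr fun e he he' => (hs e he').2 he.2

lemma mem_edgeSet_induce_toSub {F : SimpleGraph V} {T : Set V} {e : Sym2 V} :
    e ∈ ((toSub F).induce T).edgeSet ↔ e ∈ F.edgeSet ∧ ∀ x ∈ e, x ∈ T := by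
  induction e with
  | _ x y =>
    simp only [SimpleGraph.Subgraph.mem_edgeSet, SimpleGraph.Subgraph.induce_adj,
      SimpleGraph.mem_edgeSet, Sym2.mem_iff, forall_eq_or_imp, forall_eq]
    exact ⟨fun ⟨hx, hy, hxy⟩ => ⟨hxy, hx, hy⟩, fun ⟨hxy, hx, hy⟩ => ⟨hx, hy, hxy⟩⟩

lemma rInEdges_induce_toSub (F : SimpleGraph V) (R T : Finset V) :
    rInEdges ↑R ((toSub F).induce ↑T) = eIn F (R ∩ T) := by
  rw [rInEdges, eIn]
  congr 1
  ext e
  simp only [Set.mem_ofPred_eq, mem_edgeSet_induce_toSub, mem_coe, mem_inter]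
  exact ⟨fun ⟨⟨he, hT⟩, hR⟩ => ⟨he, fun x hx => ⟨hR x hx, hT x hx⟩⟩,
    fun ⟨he, h⟩ => ⟨⟨he, fun x hx => (h x hx).2⟩, fun x hx => (h x hx).1⟩⟩

lemma nverts_induce (H : Sub V) (T : Finset V) : nverts (H.induce ↑T) = #T :=
  Set.ncard_coe_finset T

lemma toReal_inv_m2t_mul_le {R : Set V} {G H : Sub V} {t : ℝ} (hH : H ≤ G) {k : ℕ}
    (hk : 2 ≤ k) (hkH : rInEdges R H + k ≤ nedges H) (hM : m2t R G t ≠ ⊤) :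
    (m2t R G t)⁻¹.toReal * ((k : ℝ) - 1) ≤ nverts H - 2 - t * rInEdges R H := by
  have hle : d2t R H t ≤ m2t R G t := le_iSup_of_le ⟨H, hH, by omega⟩ le_rfl
  rw [d2t] at hle
  split_ifs at hle with hD
  · rw [ENNReal.ofReal_le_iff_le_toReal hM, div_le_iff₀ hD] at hle
    have hkH' : (k : ℝ) + rInEdges R H ≤ nedges H := by
      exact_mod_cast (add_comm _ _).le.trans hkH
    have hk' : (2 : ℝ) ≤ k := by exact_mod_cast hk
    have hM0 : 0 < (m2t R G t).toReal := by nlinarith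
    rw [ENNReal.toReal_inv, inv_mul_le_iff₀ hM0]
    linarith
  · exact absurd (top_le_iff.mp hle) hM

lemma degI_le_of_subset_copyEdges {F : SimpleGraph ι} {R : Finset ι} {GR : Finset (R → Fin n)}
    {p : ℝ} (hGR : UpperExt F R n GR p) {σ : Finset (Sym2 (ι × Fin n))} {f : ι → Fin n}
    (hσ : ↑σ ⊆ copyEdges (Fm F R) f) :
    (degI F R GR σ : ℝ) ≤
      p ^ (eIn F R - eIn F (R ∩ classesOf σ)) * n ^ (Fintype.card ι - #(classesOf σ)) := by
  set T := classesOf σ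
  have hdeg : degI F R GR σ ≤ #((extensions R GR).filter fun pf => ∀ i ∈ T, pf.2 i = f i) := by
    rw [degI_eq_card_filter]
    exact card_le_card (monotone_filter_right _ fun pf _ hpf => eqOn_classesOf hpf hσ)
  have hexp : #R - #(R ∩ T) + (Fintype.card ι - #(R ∪ T)) = Fintype.card ι - #T := by
    have := card_union_add_card_inter R T
    have := card_le_univ (R ∪ T)
    have := card_le_card (inter_subset_left : R ∩ T ⊆ R)
    omega
  calc (degI F R GR σ : ℝ)
      ≤ #(GR.filter fun e => ∀ i : R, (i : ι) ∈ R ∩ T → e i = f i) *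
          (n : ℝ) ^ (Fintype.card ι - #(R ∪ T)) := by
        exact_mod_cast hdeg.trans (card_filter_extensions_eqOn_le R T GR f)
    _ ≤ p ^ (eIn F R - eIn F (R ∩ T)) * n ^ (#R - #(R ∩ T)) *
          (n : ℝ) ^ (Fintype.card ι - #(R ∪ T)) := by
        gcongr
        exact hGR _ inter_subset_left f
    _ = _ := by rw [mul_assoc, ← pow_add, hexp]

lemma toReal_inv_m2t_mul_le_of_subset_copyEdges {F : SimpleGraph ι} {R : Finset ι} {t : ℝ}
    (hM : m2t (↑R : Set ι) (toSub F) t ≠ ⊤) {σ : Finset (Sym2 (ι × Fin n))} {f : ι → Fin n}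
    (hσ : ↑σ ⊆ copyEdges (Fm F R) f) (hσ2 : 2 ≤ #σ) :
    (m2t (↑R : Set ι) (toSub F) t)⁻¹.toReal * ((#σ : ℝ) - 1) ≤
      #(classesOf σ) - 2 - t * eIn F (R ∩ classesOf σ) := by
  set T := classesOf σ
  have hle : (toSub F).induce ↑T ≤ toSub F :=
    (SimpleGraph.Subgraph.induce_mono_right (Set.subset_univ _)).trans_eq
      SimpleGraph.Subgraph.induce_self_verts
  have hedges : ∀ w ∈ σ.image (Sym2.map Prod.fst),
      w ∈ ((toSub F).induce ↑T).edgeSet ∧ ¬ ∀ x ∈ w, x ∈ (↑R : Set ι) := by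
    intro w hw
    obtain ⟨v, hv, rfl⟩ := mem_image.mp hw
    have hvF := map_fst_mem_edgeSet_of_mem_copyEdges (hσ hv)
    rw [Fm, SimpleGraph.edgeSet_deleteEdges] at hvF
    refine ⟨mem_edgeSet_induce_toSub.mpr ⟨hvF.1, fun x hx => ?_⟩, fun h => hvF.2 h⟩
    exact mem_coe.mpr (mem_filter.mpr ⟨mem_univ x, v, hv, hx⟩)
  have hcard : #(σ.image (Sym2.map Prod.fst)) = #σ :=
    card_image_of_injOn ((injOn_map_fst_copyEdges _ f).mono hσ)
  have h := toReal_inv_m2t_mul_le hle hσ2 (hcard ▸ rInEdges_add_card_le_nedges hedges) hM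
  rwa [nverts_induce, rInEdges_induce_toSub] at h

def nPowNegInvM2 (F : SimpleGraph V) (R : Finset V) (n : ℕ) (q : ℝ) : ℝ :=
  (n : ℝ) ^ (-(m2t (↑R : Set V) (toSub F) (-Real.logb n q))⁻¹.toReal)

lemma nPowNegInvM2_pos (F : SimpleGraph V) (R : Finset V) (hn : 0 < n) (q : ℝ) :
    0 < nPowNegInvM2 F R n q :=
  Real.rpow_pos_of_pos (by exact_mod_cast hn) _

lemma sq_mul_degI_le {F : SimpleGraph ι} {R : Finset ι} {GR : Finset (R → Fin n)} {A q : ℝ}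
    (hn : 2 ≤ n) (hA : 1 ≤ A) (hq : 0 < q) (hGR : UpperExt F R n GR (A * q))
    (hM : m2t (↑R : Set ι) (toSub F) (-Real.logb n q) ≠ ⊤)
    {σ : Finset (Sym2 (ι × Fin n))} (hσ : 2 ≤ #σ) :
    (n : ℝ) ^ 2 * degI F R GR σ ≤
      nPowNegInvM2 F R n q ^ (#σ - 1) * (n ^ Fintype.card ι * (A * q) ^ eIn F R) := by
  rcases eq_or_ne (degI F R GR σ) 0 with h0 | h0
  · rw [h0, Nat.cast_zero, mul_zero]
    have := nPowNegInvM2_pos F R (by omega : 0 < n) q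
    positivity
  obtain ⟨pf, -, -, hσf⟩ := Set.nonempty_of_ncard_ne_zero h0
  rw [nPowNegInvM2]
  set T := classesOf σ
  set t := -Real.logb n q
  set c := (m2t (↑R : Set ι) (toSub F) t)⁻¹.toReal
  have hn0 : (0 : ℝ) < n := by positivity
  have hn1 : (1 : ℝ) < n := by exact_mod_cast hn
  have hT : #T ≤ Fintype.card ι := card_le_univ T
  have heS : eIn F (R ∩ T) ≤ eIn F R := eIn_mono F inter_subset_left
  have hqt : q = n ^ (-t) := by rw [neg_neg, Real.rpow_logb hn0 hn1.ne' hq]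
  have hpow : (n : ℝ) ^ 2 * n ^ (Fintype.card ι - #T) ≤
      (n ^ (-c)) ^ (#σ - 1) * n ^ Fintype.card ι * q ^ eIn F (R ∩ T) := by
    have hexp := toReal_inv_m2t_mul_le_of_subset_copyEdges hM hσf hσ
    rw [hqt]
    simp only [← Real.rpow_natCast, ← Real.rpow_mul hn0.le, ← Real.rpow_add hn0,
      Nat.cast_sub hT, Nat.cast_sub (by omega : 1 ≤ #σ)]
    apply Real.rpow_le_rpow_of_exponent_le hn1.le
    push_cast
    linarith
  calc (n : ℝ) ^ 2 * degI F R GR σ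
      ≤ n ^ 2 * ((A * q) ^ (eIn F R - eIn F (R ∩ T)) * n ^ (Fintype.card ι - #T)) := by
        gcongr
        exact degI_le_of_subset_copyEdges hGR hσf
    _ = (A * q) ^ (eIn F R - eIn F (R ∩ T)) * (n ^ 2 * n ^ (Fintype.card ι - #T)) := by ring
    _ ≤ (A * q) ^ (eIn F R - eIn F (R ∩ T)) *
          ((n ^ (-c)) ^ (#σ - 1) * n ^ Fintype.card ι * (A * q) ^ eIn F (R ∩ T)) := by
        refine mul_le_mul_of_nonneg_left (hpow.trans ?_) (by positivity)
        gcongr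
        nlinarith
    _ = _ := by
        rw [mul_comm, mul_assoc, pow_mul_pow_sub _ heS]
        ring

lemma sum_djI_le {F : SimpleGraph ι} {R : Finset ι} {GR : Finset (R → Fin n)} {A q : ℝ}
    (hn : 2 ≤ n) (hA : 1 ≤ A) (hq : 0 < q) (hGR : UpperExt F R n GR (A * q)) {j : ℕ}
    (hj : 2 ≤ j) :
    ∑ v, (djI F R GR j v : ℝ) ≤
      nPowNegInvM2 F R n q ^ (j - 1) *
        (eCnt (Fm F R) * (n ^ Fintype.card ι * (A * q) ^ eIn F R)) := by
  by_cases hM : m2t (↑R : Set ι) (toSub F) (-Real.logb n q) = ⊤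
  · rw [nPowNegInvM2, hM, ENNReal.inv_top, ENNReal.toReal_zero, neg_zero, Real.rpow_zero,
      one_pow, one_mul]
    calc ∑ v, (djI F R GR j v : ℝ) ≤ ∑ v, (degI F R GR {v} : ℝ) :=
          sum_le_sum fun v _ => by exact_mod_cast djI_le_degI_singleton F R GR j v
      _ = eCnt (Fm F R) * (#GR * (n : ℝ) ^ (Fintype.card ι - #R)) := by
          exact_mod_cast sum_degI_singleton F R GR
      _ ≤ eCnt (Fm F R) * ((A * q) ^ eIn F R * n ^ #R * n ^ (Fintype.card ι - #R)) := by
          gcongr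
          exact card_le_of_upperExt (by omega) hGR
      _ = _ := by
          rw [mul_assoc _ ((n : ℝ) ^ #R), pow_mul_pow_sub _ (card_le_univ R)]
          ring
  have hρ := nPowNegInvM2_pos F R (by omega : 0 < n) q
  have hdj : ∀ v, degI F R GR {v} ≠ 0 → (djI F R GR j v : ℝ) ≤
      nPowNegInvM2 F R n q ^ (j - 1) * (n ^ Fintype.card ι * (A * q) ^ eIn F R) / n ^ 2 := by
    intro v _
    refine natCast_iSup_le (by positivity) fun ⟨σ, _, hσj⟩ => ?_
    subst hσj
    exact (le_div_iff₀' (by positivity)).mpr (sq_mul_degI_le hn hA hq hGR hM hj)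
  have hdj0 : ∀ v, degI F R GR {v} = 0 → djI F R GR j v = 0 :=
    fun v hv => Nat.le_zero.mp (hv ▸ djI_le_degI_singleton F R GR j v)
  calc ∑ v, (djI F R GR j v : ℝ)
      ≤ ∑ v ∈ univ.filter (fun v : Sym2 (ι × Fin n) => degI F R GR {v} ≠ 0),
          nPowNegInvM2 F R n q ^ (j - 1) * (n ^ Fintype.card ι * (A * q) ^ eIn F R) / n ^ 2 := by
        rw [sum_filter]
        refine sum_le_sum fun v _ => ?_
        split_ifs with hv
        · exact hdj v hv
        · simp [hdj0 v (not_not.mp hv)]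
    _ ≤ (eCnt (Fm F R) * n ^ 2 : ℕ) *
          (nPowNegInvM2 F R n q ^ (j - 1) * (n ^ Fintype.card ι * (A * q) ^ eIn F R) / n ^ 2) := by
        rw [sum_const, nsmul_eq_mul]
        gcongr
        exact card_filter_degI_ne_zero_le F R GR
    _ = _ := by
        have : (n : ℝ) ≠ 0 := by positivity
        push_cast
        field_simp

lemma sum_djI_div_le {F : SimpleGraph ι} {R : Finset ι} {GR : Finset (R → Fin n)} {A q γ : ℝ}
    (hn : 2 ≤ n) (hA : 1 ≤ A) (hq : 0 < q) (hγ : 0 < γ) (hGR : UpperExt F R n GR (A * q))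
    (hW : ∑ v, degI F R GR {v} ≠ 0) {j : ℕ} (hj : 2 ≤ j) :
    (∑ v, (djI F R GR j v : ℝ)) /
        ((γ⁻¹ * nPowNegInvM2 F R n q) ^ (j - 1) * ∑ v, (degI F R GR {v} : ℝ)) ≤
      γ ^ (j - 1) * ((n : ℝ) ^ #R * (A * q) ^ eIn F R) / #GR := by
  rw [sum_degI_singleton] at hW
  have hm : (eCnt (Fm F R) : ℝ) ≠ 0 := by exact_mod_cast left_ne_zero_of_mul hW
  have hGR0 : (#GR : ℝ) ≠ 0 := by exact_mod_cast left_ne_zero_of_mul (right_ne_zero_of_mul hW)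
  have hn0 : (0 : ℝ) < n := by positivity
  have hρ := nPowNegInvM2_pos F R (by omega : 0 < n) q
  have hdeg : ∑ v, (degI F R GR {v} : ℝ) =
      eCnt (Fm F R) * (#GR * (n : ℝ) ^ (Fintype.card ι - #R)) := by
    exact_mod_cast sum_degI_singleton F R GR
  rw [hdeg, div_le_iff₀ (by positivity)]
  refine (sum_djI_le hn hA hq hGR hj).trans_eq ?_
  rw [← pow_mul_pow_sub (n : ℝ) (card_le_univ R)]
  field_simp
  rw [div_pow, mul_div_cancel₀ _ (pow_ne_zero _ hγ.ne')]

lemma two_pow_mul_sum_le {m : ℕ} {a : ℕ → ℝ} {b : ℝ} (hb : 0 ≤ b)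
    (ha : ∀ j ∈ Icc 2 m, 0 ≤ a j ∧ a j ≤ b) :
    (2 : ℝ) ^ (m.choose 2 - 1) * ∑ j ∈ Icc 2 m, a j * ((2 : ℝ) ^ ((j - 1).choose 2))⁻¹ ≤
      m * 2 ^ m ^ 2 * b := by
  have hterm : ∀ j ∈ Icc 2 m, a j * ((2 : ℝ) ^ ((j - 1).choose 2))⁻¹ ≤ b := fun j hj =>
    (mul_le_of_le_one_right (ha j hj).1 (inv_le_one_of_one_le₀ (one_le_pow₀ one_le_two))).trans
      (ha j hj).2
  have hcard : ((#(Icc 2 m) : ℕ) : ℝ) ≤ m := by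
    rw [Nat.card_Icc]
    exact_mod_cast Nat.sub_le_of_le_add (by omega)
  calc (2 : ℝ) ^ (m.choose 2 - 1) * ∑ j ∈ Icc 2 m, a j * ((2 : ℝ) ^ ((j - 1).choose 2))⁻¹
      ≤ 2 ^ m ^ 2 * (#(Icc 2 m) * b) := by
        refine mul_le_mul (pow_le_pow_right₀ one_le_two ((Nat.sub_le _ _).trans
          (Nat.choose_le_pow m 2))) ?_ (sum_nonneg fun j hj => ?_) (by positivity)
        · simpa using sum_le_card_nsmul _ _ b hterm
        · exact mul_nonneg (ha j hj).1 (by positivity)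
    _ ≤ 2 ^ m ^ 2 * (m * b) := by gcongr
    _ = m * 2 ^ m ^ 2 * b := by ring

end

theorem stmt16_general {ι : Type} [Fintype ι] (F : SimpleGraph ι) (R : Finset ι)
    (γ : ℝ) (hγ0 : 0 < γ) (hγ1 : γ ≤ 1)
    (A : ℝ) (hA : 1 ≤ A)
    (q : ℕ → ℝ) (hq0 : ∀ n, 0 < q n) :
    ∃ N : ℕ, ∀ n ≥ N, ∀ GR : Finset ((↥R) → Fin n),
      UpperExt F R n GR (A * q n) →
      codegFn F R GR
          (γ⁻¹ * (n : ℝ) ^ (-((m2t (↑R : Set ι) (toSub F) (-Real.logb n (q n)))⁻¹.toReal))) ≤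
        γ * eCnt (Fm F R) * 2 ^ (eCnt (Fm F R)) ^ 2 *
          ((n : ℝ) ^ R.card * (A * q n) ^ eIn F R) / (GR.card : ℝ) := by
  refine ⟨2, fun n hn GR hGR => ?_⟩
  have hq := hq0 n
  have hA0 : 0 < A := by linarith
  rw [codegFn]
  split_ifs with hW
  · positivity
  refine (two_pow_mul_sum_le (b := γ * ((n : ℝ) ^ R.card * (A * q n) ^ eIn F R) / GR.card)
    (by positivity) fun j hj => ⟨?_, ?_⟩).trans_eq (by ring)
  · positivity
  · obtain ⟨hj2, -⟩ := mem_Icc.mp hj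
    refine (sum_djI_div_le hn hA hq hγ0 hGR hW hj2).trans ?_
    gcongr
    exact pow_le_of_le_one hγ0.le hγ1 (by omega)

theorem stmt16 {ι : Type} [Fintype ι] (F : SimpleGraph ι) (R : Finset ι)
    (hE : 1 < eCnt (Fm F R))
    (γ : ℝ) (hγ0 : 0 < γ) (hγ1 : γ ≤ 1)
    (A : ℝ) (hA : 1 ≤ A)
    (q : ℕ → ℝ) (hq0 : ∀ n, 0 < q n) (hq1 : ∀ n, q n ≤ 1) :
    ∃ N : ℕ, ∀ n ≥ N, ∀ GR : Finset ((↥R) → Fin n),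
      UpperExt F R n GR (A * q n) →
      codegFn F R GR
          (γ⁻¹ * (n : ℝ) ^ (-((m2t (↑R : Set ι) (toSub F) (-Real.logb n (q n)))⁻¹.toReal))) ≤
        γ * eCnt (Fm F R) * 2 ^ (eCnt (Fm F R)) ^ 2 *
          ((n : ℝ) ^ R.card * (A * q n) ^ eIn F R) / (GR.card : ℝ) :=
  stmt16_general F R γ hγ0 hγ1 A hA q hq0

end OG
end
end
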